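/- arXiv:2312.03693 — 9 statements merged into one kernel-verified Lean document; each statement's English description precedes it below -/
import Mathlib

section
/- Let $0 \le p_1 < q_1$ and $0 \le p_2 < q_2$ with $p_1 \ge p_2$ and $q_1 > q_2$. Define $h(x) = \frac{x^{p_1} - x^{q_1}}{x^{p_2} - x^{q_2}}$ for $x \in (0,1)$. Then $h$ is strictly increasing on $(0,1)$ and $h(x) \le \frac{q_1 - p_1}{q_2 - p_2}$ for all $x \in (0,1)$. -/
/-!
Write `r = (q₁ - p₁) / (q₂ - p₂)` and `S w = (w ^ r - 1) / (w - 1)`, the slope of `t ↦ t ^ r`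
between `1` and `w`. Factoring out `x ^ p₁, x ^ p₂`, or `x ^ q₁, x ^ q₂`, gives
`h x = x ^ (p₁ - p₂) * S (x ^ (q₂ - p₂)) = x ^ (q₁ - q₂) * S (x ^ (p₂ - q₂))`.
If `r > 1`, `t ↦ t ^ r` is strictly convex, so `S` is strictly increasing on `(0, 1)` and the
first form is strictly increasing, as `p₂ ≤ p₁`. If `r ≤ 1`, `t ↦ t ^ r` is concave, so `S` is
decreasing on `(1, ∞)`, and in the second form `S (x ^ (p₂ - q₂))` is increasing while
`x ^ (q₁ - q₂)` is strictly increasing. In both cases the power factor is at most `1`, and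
`S ≤ r`, the derivative of `t ↦ t ^ r` at `1`, by convexity or concavity.
-/

open Set Real

theorem StrictMonoOn.mul_monotoneOn_of_pos {α M₀ : Type*} [Preorder α] [Mul M₀] [Zero M₀]
    [Preorder M₀] [PosMulMono M₀] [MulPosStrictMono M₀] {s : Set α} {f g : α → M₀}
    (hf : StrictMonoOn f s) (hg : MonotoneOn g s) (hf0 : ∀ x ∈ s, 0 ≤ f x)
    (hg0 : ∀ x ∈ s, 0 < g x) : StrictMonoOn (fun x => f x * g x) s := fun x hx y hy hxy =>
  calc f x * g x < f y * g x := mul_lt_mul_of_pos_right (hf hx hy hxy) (hg0 x hx)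
    _ ≤ f y * g y := mul_le_mul_of_nonneg_left (hg hx hy hxy.le) (hf0 y hy)

namespace Real

theorem rpow_sub_rpow_div_rpow_sub_rpow {x : ℝ} (hx : 0 < x) (p₁ q₁ p₂ q₂ : ℝ)
    (hpq : p₂ ≠ q₂) :
    (x ^ p₁ - x ^ q₁) / (x ^ p₂ - x ^ q₂) =
        x ^ (p₁ - p₂) * slope (fun t : ℝ => t ^ ((q₁ - p₁) / (q₂ - p₂))) 1 (x ^ (q₂ - p₂)) := by
  have factor : ∀ p q : ℝ, x ^ p - x ^ q = -(x ^ p * (x ^ (q - p) - 1)) := fun p q => by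
    rw [mul_sub, ← rpow_add hx, add_sub_cancel, mul_one, neg_sub]
  rw [factor p₁, factor p₂, neg_div_neg_eq, mul_div_mul_comm, ← rpow_sub hx, slope_def_field,
    ← rpow_mul hx.le, mul_div_cancel₀ _ (sub_ne_zero.2 hpq.symm), one_rpow]

variable {r : ℝ}

theorem slope_rpow_one_pos (hr : 0 < r) {w : ℝ} (hw : 0 < w) (hw1 : w ≠ 1) :
    0 < slope (fun t : ℝ => t ^ r) 1 w := by
  rw [slope_def_field, one_rpow]
  rcases hw1.lt_or_gt with hw1 | hw1
  · exact div_pos_of_neg_of_neg (sub_neg.2 (rpow_lt_one hw.le hw1 hr)) (sub_neg.2 hw1)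
  · exact div_pos (sub_pos.2 (one_lt_rpow hw1 hr)) (sub_pos.2 hw1)

theorem hasDerivAt_rpow_const_one (r : ℝ) : HasDerivAt (fun t : ℝ => t ^ r) r 1 := by
  simpa using hasDerivAt_rpow_const (x := 1) (p := r) (Or.inl one_ne_zero)

theorem strictMonoOn_slope_rpow_one (hr : 1 < r) :
    StrictMonoOn (slope (fun t : ℝ => t ^ r) 1) (Ioo 0 1) :=
  fun u hu v hv huv => by
    simpa only [slope_def_field] using (strictConvexOn_rpow hr).secant_strict_mono
      (a := 1) (by simp) hu.1.le hv.1.le hu.2.ne hv.2.ne huv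

theorem slope_rpow_one_le_of_lt_one (hr : 1 ≤ r) {w : ℝ} (hw : 0 ≤ w) (hw1 : w < 1) :
    slope (fun t : ℝ => t ^ r) 1 w ≤ r := by
  rw [slope_comm]
  exact (convexOn_rpow hr).slope_le_of_hasDerivAt hw (by simp) hw1 (hasDerivAt_rpow_const_one r)

theorem antitoneOn_slope_rpow_one (hr0 : 0 ≤ r) (hr1 : r ≤ 1) :
    AntitoneOn (slope (fun t : ℝ => t ^ r) 1) (Ioi 1) :=
  ((concaveOn_rpow hr0 hr1).slope_anti (by simp)).mono fun _ hw =>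
    ⟨mem_Ici.2 (zero_le_one.trans hw.le), hw.ne'⟩

theorem slope_rpow_one_le_of_one_lt (hr0 : 0 ≤ r) (hr1 : r ≤ 1) {w : ℝ} (hw1 : 1 < w) :
    slope (fun t : ℝ => t ^ r) 1 w ≤ r :=
  (concaveOn_rpow hr0 hr1).slope_le_of_hasDerivAt (by simp) (by simp; linarith) hw1
    (hasDerivAt_rpow_const_one r)

theorem strictMonoOn_rpow_mul_slope_rpow_of_one_lt {a c : ℝ} (ha : 0 ≤ a) (hc : 0 < c)
    (hr : 1 < r) :
    StrictMonoOn (fun x => x ^ a * slope (fun t : ℝ => t ^ r) 1 (x ^ c)) (Ioo 0 1) := by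
  have hmaps : MapsTo (fun x : ℝ => x ^ c) (Ioo 0 1) (Ioo 0 1) := fun x hx =>
    ⟨rpow_pos_of_pos hx.1 c, rpow_lt_one hx.1.le hx.2 hc⟩
  have hslope : StrictMonoOn (fun x => slope (fun t : ℝ => t ^ r) 1 (x ^ c)) (Ioo 0 1) :=
    (strictMonoOn_slope_rpow_one hr).comp (fun x hx y _ hxy => rpow_lt_rpow hx.1.le hxy hc) hmaps
  refine (hslope.mul_monotoneOn_of_pos (fun x hx y _ hxy => rpow_le_rpow hx.1.le hxy ha)
    (fun x hx => (slope_rpow_one_pos (by linarith) (hmaps hx).1 (hmaps hx).2.ne).le)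
    (fun x hx => rpow_pos_of_pos hx.1 a)).congr fun x _ => mul_comm _ _

theorem strictMonoOn_rpow_mul_slope_rpow_of_le_one {a c : ℝ} (ha : 0 < a) (hc : c < 0)
    (hr0 : 0 < r) (hr1 : r ≤ 1) :
    StrictMonoOn (fun x => x ^ a * slope (fun t : ℝ => t ^ r) 1 (x ^ c)) (Ioo 0 1) := by
  have hmaps : MapsTo (fun x : ℝ => x ^ c) (Ioo 0 1) (Ioi 1) := fun x hx =>
    one_lt_rpow_of_pos_of_lt_one_of_neg hx.1 hx.2 hc
  have hslope : MonotoneOn (fun x => slope (fun t : ℝ => t ^ r) 1 (x ^ c)) (Ioo 0 1) :=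
    (antitoneOn_slope_rpow_one hr0.le hr1).comp
      ((antitoneOn_rpow_Ioi_of_exponent_nonpos hc.le).mono Ioo_subset_Ioi_self) hmaps
  have hpow : StrictMonoOn (fun x : ℝ => x ^ a) (Ioo 0 1) := fun x hx y _ hxy =>
    rpow_lt_rpow hx.1.le hxy ha
  exact hpow.mul_monotoneOn_of_pos hslope (fun x hx => (rpow_pos_of_pos hx.1 a).le)
    (fun x hx => slope_rpow_one_pos hr0 (zero_lt_one.trans (hmaps hx)) (hmaps hx).ne')

theorem rpow_mul_slope_rpow_le {a x w : ℝ} (ha : 0 ≤ a) (hx : x ∈ Ioo (0 : ℝ) 1)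
    (hr : 0 < r) (hw : 0 < w) (hw1 : w ≠ 1) (hslope : slope (fun t : ℝ => t ^ r) 1 w ≤ r) :
    x ^ a * slope (fun t : ℝ => t ^ r) 1 w ≤ r :=
  (mul_le_of_le_one_left (slope_rpow_one_pos hr hw hw1).le
    (rpow_le_one hx.1.le hx.2.le ha)).trans hslope

end Real

theorem ratio_lemma_increasing_general (p₁ q₁ p₂ q₂ : ℝ)
    (hq₁ : p₁ < q₁) (hq₂ : p₂ < q₂)
    (h12 : p₂ ≤ p₁) (hqq : q₂ < q₁)
    (h : ℝ → ℝ) (hh : ∀ x ∈ Ioo (0:ℝ) 1, h x = (x ^ p₁ - x ^ q₁) / (x ^ p₂ - x ^ q₂)) :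
    StrictMonoOn h (Ioo (0:ℝ) 1) ∧
      ∀ x ∈ Ioo (0:ℝ) 1, h x ≤ (q₁ - p₁) / (q₂ - p₂) := by
  set r := (q₁ - p₁) / (q₂ - p₂)
  have hr : 0 < r := div_pos (by linarith) (by linarith)
  rcases lt_or_ge 1 r with hr1 | hr1
  · have hform : EqOn h (fun x => x ^ (p₁ - p₂) * slope (fun t : ℝ => t ^ r) 1 (x ^ (q₂ - p₂)))
        (Ioo 0 1) := fun x hx => by
      rw [hh x hx, rpow_sub_rpow_div_rpow_sub_rpow hx.1 _ _ _ _ hq₂.ne]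
    refine ⟨(strictMonoOn_rpow_mul_slope_rpow_of_one_lt (sub_nonneg.2 h12) (sub_pos.2 hq₂)
      hr1).congr hform.symm, fun x hx => ?_⟩
    have hw : x ^ (q₂ - p₂) ∈ Ioo 0 1 :=
      ⟨rpow_pos_of_pos hx.1 _, rpow_lt_one hx.1.le hx.2 (sub_pos.2 hq₂)⟩
    rw [hform hx]
    exact rpow_mul_slope_rpow_le (sub_nonneg.2 h12) hx hr hw.1 hw.2.ne
      (slope_rpow_one_le_of_lt_one hr1.le hw.1.le hw.2)
  · have hform : EqOn h (fun x => x ^ (q₁ - q₂) * slope (fun t : ℝ => t ^ r) 1 (x ^ (p₂ - q₂)))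
        (Ioo 0 1) := fun x hx => by
      have hr_swap : (p₁ - q₁) / (p₂ - q₂) = r := by
        rw [← neg_sub q₁, ← neg_sub q₂, neg_div_neg_eq]
      rw [hh x hx, ← neg_div_neg_eq, neg_sub, neg_sub,
        rpow_sub_rpow_div_rpow_sub_rpow hx.1 _ _ _ _ hq₂.ne', hr_swap]
    refine ⟨(strictMonoOn_rpow_mul_slope_rpow_of_le_one (sub_pos.2 hqq) (sub_neg.2 hq₂)
      hr hr1).congr hform.symm, fun x hx => ?_⟩
    have hw : 1 < x ^ (p₂ - q₂) :=
      one_lt_rpow_of_pos_of_lt_one_of_neg hx.1 hx.2 (sub_neg.2 hq₂)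
    rw [hform hx]
    exact rpow_mul_slope_rpow_le (sub_pos.2 hqq).le hx hr (zero_lt_one.trans hw) hw.ne'
      (slope_rpow_one_le_of_one_lt hr.le hr1 hw)

theorem ratio_lemma_increasing (p₁ q₁ p₂ q₂ : ℝ)
    (hp₁ : 0 ≤ p₁) (hq₁ : p₁ < q₁) (hp₂ : 0 ≤ p₂) (hq₂ : p₂ < q₂)
    (h12 : p₂ ≤ p₁) (hqq : q₂ < q₁)
    (h : ℝ → ℝ) (hh : ∀ x ∈ Ioo (0:ℝ) 1, h x = (x ^ p₁ - x ^ q₁) / (x ^ p₂ - x ^ q₂)) :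
    StrictMonoOn h (Ioo (0:ℝ) 1) ∧
      ∀ x ∈ Ioo (0:ℝ) 1, h x ≤ (q₁ - p₁) / (q₂ - p₂) :=
  ratio_lemma_increasing_general p₁ q₁ p₂ q₂ hq₁ hq₂ h12 hqq h hh
end

section
/- For all $x, y > 0$, $H(x,y) = -(2x-1)B(x,\tfrac12) + (2x+2y-1)B(x+y,\tfrac12)$, where $H(x,y) = \int_0^1 \frac{t^{x-1}(1-t^y)}{(1-t)^{3/2}}\,dt$ and $B$ is the Euler Beta function. -/
open MeasureTheory

noncomputable def betaReal (x y : ℝ) : ℝ :=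
  ∫ t in (0:ℝ)..1, t ^ (x - 1) * (1 - t) ^ (y - 1)

noncomputable def Hfun (x y : ℝ) : ℝ :=
  ∫ t in (0:ℝ)..1, t ^ (x - 1) * (1 - t ^ y) / (1 - t) ^ ((3:ℝ)/2)

open Set Filter Topology

/-! The function `F t = t ^ x * (1 - t ^ y) * (1 - t) ^ (1 - s)` tends to `0` at both ends of
`(0, 1)` when `s < 2`, and its derivative is `s - 1` times the integrand of `H` (with `3/2`
replaced by `s`) plus a linear combination of the Beta integrands for `B(x, 2 - s)` and
`B(x + y, 2 - s)`; integrating `F'` over `(0, 1)` gives the identity, and `s = 3/2` is the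
theorem. Everything is integrable because `1 - t ^ y ≤ max 1 y * (1 - t)` on `(0, 1]`. -/

lemma one_sub_rpow_le_max_mul_one_sub {y t : ℝ} (ht0 : 0 < t) (ht1 : t ≤ 1) :
    1 - t ^ y ≤ max 1 y * (1 - t) := by
  rcases le_total y 1 with hy1 | hy1
  · have : t ≤ t ^ y := by simpa using Real.rpow_le_rpow_of_exponent_ge ht0 ht1 hy1
    nlinarith [le_max_left 1 y]
  · have bernoulli := one_add_mul_self_le_rpow_one_add (by linarith : (-1:ℝ) ≤ t - 1) hy1
    rw [add_sub_cancel] at bernoulli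
    nlinarith [le_max_right 1 y]

lemma one_sub_rpow_mul_le {y c t : ℝ} (ht : t ∈ Ioo (0:ℝ) 1) :
    (1 - t ^ y) * (1 - t) ^ c ≤ max 1 y * (1 - t) ^ (c + 1) := by
  have h1t : 0 < 1 - t := sub_pos.2 ht.2
  calc (1 - t ^ y) * (1 - t) ^ c ≤ max 1 y * (1 - t) * (1 - t) ^ c :=
        mul_le_mul_of_nonneg_right (one_sub_rpow_le_max_mul_one_sub ht.1 ht.2.le) (by positivity)
    _ = max 1 y * (1 - t) ^ (c + 1) := by rw [Real.rpow_add_one h1t.ne']; ring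

lemma one_sub_rpow_mul_nonneg {y c t : ℝ} (hy : 0 ≤ y) (ht : t ∈ Ioo (0:ℝ) 1) :
    0 ≤ (1 - t ^ y) * (1 - t) ^ c :=
  mul_nonneg (sub_nonneg.2 (Real.rpow_le_one ht.1.le ht.2.le hy))
    (Real.rpow_nonneg (sub_pos.2 ht.2).le _)

lemma intervalIntegrable_rpow_mul_one_sub_rpow {a b : ℝ} (ha : 0 < a) (hb : 0 < b) :
    IntervalIntegrable (fun t : ℝ => t ^ (a - 1) * (1 - t) ^ (b - 1)) volume 0 1 := by
  refine (Complex.betaIntegral_convergent (u := a) (v := b) (by simpa) (by simpa)).norm.congr ?_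
  rw [uIoc_of_le zero_le_one]
  rintro t ⟨ht0, ht1⟩
  have hcast : (t : ℂ) ^ ((a : ℂ) - 1) * (1 - (t : ℂ)) ^ ((b : ℂ) - 1)
      = ((t ^ (a - 1) * (1 - t) ^ (b - 1) : ℝ) : ℂ) := by
    push_cast [Complex.ofReal_cpow ht0.le, Complex.ofReal_cpow (sub_nonneg.2 ht1)]
    rfl
  have hnonneg : 0 ≤ t ^ (a - 1) * (1 - t) ^ (b - 1) := by
    have := sub_nonneg.2 ht1
    positivity
  simp only [hcast, Complex.norm_real, Real.norm_of_nonneg hnonneg]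

lemma intervalIntegrable_rpow_mul_one_sub_rpow_div {x y s : ℝ} (hx : 0 < x) (hy : 0 ≤ y)
    (hs : s < 2) :
    IntervalIntegrable (fun t : ℝ => t ^ (x - 1) * (1 - t ^ y) / (1 - t) ^ s) volume 0 1 := by
  rw [intervalIntegrable_iff_integrableOn_Ioo_of_le zero_le_one]
  have hdom : IntegrableOn (fun t : ℝ => max 1 y * (t ^ (x - 1) * (1 - t) ^ (2 - s - 1)))
      (Ioo 0 1) := by
    rw [← intervalIntegrable_iff_integrableOn_Ioo_of_le zero_le_one]
    exact (intervalIntegrable_rpow_mul_one_sub_rpow hx (by linarith)).const_mul _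
  have hcont : ContinuousOn (fun t : ℝ => t ^ (x - 1) * (1 - t ^ y) / (1 - t) ^ s) (Ioo 0 1) := by
    refine ContinuousOn.div ?_ ?_ fun t ht => (Real.rpow_pos_of_pos (sub_pos.2 ht.2) _).ne'
    · exact ContinuousOn.mul (continuousOn_id.rpow_const fun t ht => Or.inl ht.1.ne')
        (continuousOn_const.sub (continuousOn_id.rpow_const fun t ht => Or.inl ht.1.ne'))
    · exact (continuousOn_const.sub continuousOn_id).rpow_const
        fun t ht => Or.inl (sub_pos.2 ht.2).ne'
  refine hdom.mono' (hcont.aestronglyMeasurable measurableSet_Ioo) ?_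
  filter_upwards [ae_restrict_mem measurableSet_Ioo] with t ht
  have h1t : 0 < 1 - t := sub_pos.2 ht.2
  have hnonneg : 0 ≤ (1 - t ^ y) * (1 - t) ^ (-s) := one_sub_rpow_mul_nonneg hy ht
  have hbound := one_sub_rpow_mul_le (y := y) (c := -s) ht
  rw [show -s + 1 = 2 - s - 1 by ring] at hbound
  have hrw : t ^ (x - 1) * (1 - t ^ y) / (1 - t) ^ s
      = t ^ (x - 1) * ((1 - t ^ y) * (1 - t) ^ (-s)) := by
    rw [Real.rpow_neg h1t.le, ← div_eq_mul_inv, mul_div_assoc]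
  have hpow : 0 ≤ t ^ (x - 1) := Real.rpow_nonneg ht.1.le _
  rw [hrw, Real.norm_of_nonneg (mul_nonneg hpow hnonneg)]
  exact (mul_le_mul_of_nonneg_left hbound hpow).trans_eq (by ring)

lemma hasDerivAt_rpow_mul_one_sub_rpow_mul_rpow {x y s t : ℝ} (ht : t ∈ Ioo (0:ℝ) 1) :
    HasDerivAt (fun t : ℝ => t ^ x * (1 - t ^ y) * (1 - t) ^ (1 - s))
      ((s - 1) * (t ^ (x - 1) * (1 - t ^ y) / (1 - t) ^ s)
        + (x + 1 - s) * (t ^ (x - 1) * (1 - t) ^ (2 - s - 1))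
        - (x + y + 1 - s) * (t ^ (x + y - 1) * (1 - t) ^ (2 - s - 1))) t := by
  obtain ⟨ht0, ht1⟩ := ht
  have h1t : 0 < 1 - t := sub_pos.2 ht1
  have hpow_x : HasDerivAt (fun t : ℝ => t ^ x) (x * t ^ (x - 1)) t :=
    Real.hasDerivAt_rpow_const (Or.inl ht0.ne')
  have hpow_y : HasDerivAt (fun t : ℝ => 1 - t ^ y) (-(y * t ^ (y - 1))) t :=
    (Real.hasDerivAt_rpow_const (Or.inl ht0.ne')).const_sub 1
  have hpow_1t : HasDerivAt (fun t : ℝ => (1 - t) ^ (1 - s))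
      (-1 * (1 - s) * (1 - t) ^ (1 - s - 1)) t := by
    simpa using ((hasDerivAt_id t).const_sub 1).rpow_const (p := 1 - s) (Or.inl h1t.ne')
  refine ((hpow_x.mul hpow_y).mul hpow_1t).congr_deriv ?_
  simp only [Pi.mul_apply, show 2 - s - 1 = 1 - s by ring, show 1 - s - 1 = -s by ring,
    Real.rpow_sub_one ht0.ne', Real.rpow_add ht0, Real.rpow_sub h1t, Real.rpow_one,
    Real.rpow_neg h1t.le]
  field_simp
  ring

lemma tendsto_rpow_mul_one_sub_rpow_mul_rpow_nhdsGT_zero {x y s : ℝ} (hx : 0 < x)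
    (hy : 0 ≤ y) :
    Tendsto (fun t : ℝ => t ^ x * (1 - t ^ y) * (1 - t) ^ (1 - s)) (𝓝[>] 0) (𝓝 0) := by
  have hcont : ContinuousAt (fun t : ℝ => t ^ x * (1 - t ^ y) * (1 - t) ^ (1 - s)) 0 :=
    ((Real.continuousAt_rpow_const 0 x (Or.inr hx.le)).mul
      (continuousAt_const.sub (Real.continuousAt_rpow_const 0 y (Or.inr hy)))).mul
      ((continuousAt_const.sub continuousAt_id).rpow_const (Or.inl (by norm_num)))
  simpa [Real.zero_rpow hx.ne'] using hcont.tendsto.mono_left nhdsWithin_le_nhds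

lemma tendsto_rpow_mul_one_sub_rpow_mul_rpow_nhdsLT_one {x y s : ℝ} (hx : 0 ≤ x) (hy : 0 ≤ y)
    (hs : s < 2) :
    Tendsto (fun t : ℝ => t ^ x * (1 - t ^ y) * (1 - t) ^ (1 - s)) (𝓝[<] 1) (𝓝 0) := by
  have hupper : Tendsto (fun t : ℝ => max 1 y * (1 - t) ^ (1 - s + 1)) (𝓝[<] 1) (𝓝 0) := by
    have hcont : ContinuousAt (fun t : ℝ => max 1 y * (1 - t) ^ (1 - s + 1)) 1 :=
      continuousAt_const.mul
        ((continuousAt_const.sub continuousAt_id).rpow_const (Or.inr (by linarith)))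
    simpa [Real.zero_rpow (by linarith : 1 - s + 1 ≠ 0)]
      using hcont.tendsto.mono_left nhdsWithin_le_nhds
  refine tendsto_of_tendsto_of_tendsto_of_le_of_le' tendsto_const_nhds hupper ?_ ?_ <;>
    filter_upwards [Ioo_mem_nhdsLT zero_lt_one] with t ht <;> rw [mul_assoc]
  · exact mul_nonneg (Real.rpow_nonneg ht.1.le _) (one_sub_rpow_mul_nonneg hy ht)
  · exact (mul_le_of_le_one_left (one_sub_rpow_mul_nonneg hy ht)
      (Real.rpow_le_one ht.1.le ht.2.le hx)).trans (one_sub_rpow_mul_le ht)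

theorem integral_rpow_mul_one_sub_rpow_div {x y s : ℝ} (hx : 0 < x) (hy : 0 ≤ y) (hs : s < 2) :
    (s - 1) * ∫ t in (0:ℝ)..1, t ^ (x - 1) * (1 - t ^ y) / (1 - t) ^ s
      = (x + y + 1 - s) * betaReal (x + y) (2 - s) - (x + 1 - s) * betaReal x (2 - s) := by
  have hH := (intervalIntegrable_rpow_mul_one_sub_rpow_div hx hy hs).const_mul (s - 1)
  have hBx := (intervalIntegrable_rpow_mul_one_sub_rpow hx (by linarith : 0 < 2 - s)).const_mul
    (x + 1 - s)
  have hBxy := (intervalIntegrable_rpow_mul_one_sub_rpow (by linarith : 0 < x + y)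
    (by linarith : 0 < 2 - s)).const_mul (x + y + 1 - s)
  have hftc := intervalIntegral.integral_eq_sub_of_hasDerivAt_of_tendsto zero_lt_one
    (fun t ht => hasDerivAt_rpow_mul_one_sub_rpow_mul_rpow ht) ((hH.add hBx).sub hBxy)
    (tendsto_rpow_mul_one_sub_rpow_mul_rpow_nhdsGT_zero hx hy)
    (tendsto_rpow_mul_one_sub_rpow_mul_rpow_nhdsLT_one hx.le hy hs)
  rw [intervalIntegral.integral_sub (hH.add hBx) hBxy, intervalIntegral.integral_add hH hBx,
    intervalIntegral.integral_const_mul, intervalIntegral.integral_const_mul,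
    intervalIntegral.integral_const_mul, sub_self] at hftc
  unfold betaReal
  linarith

theorem H_eq_beta (x y : ℝ) (hx : 0 < x) (hy : 0 < y) :
    Hfun x y = -(2 * x - 1) * betaReal x (1/2) + (2 * x + 2 * y - 1) * betaReal (x + y) (1/2) := by
  have h := integral_rpow_mul_one_sub_rpow_div (s := 3 / 2) hx hy.le (by norm_num)
  rw [show (2:ℝ) - 3 / 2 = 1 / 2 by norm_num] at h
  unfold Hfun
  linarith
end

section
/- For any $1 < p < q$ with $p < \frac{7}{3}$, $\int_0^1 \frac{-(5-p)(1-s^{\frac{p-1}{2}}) + (5-q)(1-s^{\frac{q-1}{2}})}{(s^{\frac{p-1}{2}} - s^{\frac{q-1}{2}})^{3/2}}\,ds = 2\,\frac{7-2p-q}{q-p}\,B\!\left(\frac{7-3p}{2(q-p)}, \frac{1}{2}\right)$. -/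
/-!
Write `r = (q - p) / 2`. The function
`H s = 4 (s^((5-p)/4) - s^((7-3p)/4)) (1 - s^r)^(-1/2)` vanishes at `0` and `1`, and its
derivative is the integrand minus `2 (7-2p-q)/(q-p)` times `r s^((7-3p)/4 - 1) (1 - s^r)^(-1/2)`.
The substitution `t = s^r` turns the latter into the Beta integrand with parameters
`((7-3p)/(2(q-p)), 1/2)`. Integrability near the endpoints comes from the Bernoulli bounds
`min e 1 (1 - s) ≤ 1 - s^e ≤ max e 1 (1 - s)`.
-/

open MeasureTheory

open Real Set Filter Topology intervalIntegral

namespace Real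

theorem one_sub_rpow_le_max_mul {e x : ℝ} (he : 0 < e) (hx₀ : 0 ≤ x) (hx₁ : x ≤ 1) :
    1 - x ^ e ≤ max e 1 * (1 - x) := by
  rcases hx₀.eq_or_lt with rfl | hx₀
  · simp [zero_rpow he.ne']
  rcases le_total e 1 with h | h
  · have := rpow_le_rpow_of_exponent_ge hx₀ hx₁ h
    rw [rpow_one] at this
    nlinarith [le_max_right e 1]
  · have := one_add_mul_self_le_rpow_one_add (s := x - 1) (by linarith) h
    rw [add_sub_cancel] at this
    nlinarith [le_max_left e 1]

theorem min_mul_le_one_sub_rpow {e x : ℝ} (he : 0 < e) (hx₀ : 0 ≤ x) (hx₁ : x ≤ 1) :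
    min e 1 * (1 - x) ≤ 1 - x ^ e := by
  rcases hx₀.eq_or_lt with rfl | hx₀
  · simp [zero_rpow he.ne']
  rcases le_total e 1 with h | h
  · have := rpow_one_add_le_one_add_mul_self (s := x - 1) (by linarith) he.le h
    rw [add_sub_cancel] at this
    nlinarith [min_le_left e 1]
  · have := rpow_le_rpow_of_exponent_ge hx₀ hx₁ h
    rw [rpow_one] at this
    nlinarith [min_le_right e 1]

theorem abs_one_sub_rpow_le {e x : ℝ} (he : 0 < e) (hx₀ : 0 ≤ x) (hx₁ : x ≤ 1) :
    |1 - x ^ e| ≤ max e 1 * (1 - x) := by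
  rw [abs_of_nonneg (sub_nonneg.2 (rpow_le_one hx₀ hx₁ he.le))]
  exact one_sub_rpow_le_max_mul he hx₀ hx₁

theorem one_sub_rpow_rpow_le {r κ x : ℝ} (hr : 0 < r) (hκ : κ ≤ 0) (hx₀ : 0 ≤ x)
    (hx₁ : x < 1) :
    (1 - x ^ r) ^ κ ≤ min r 1 ^ κ * (1 - x) ^ κ := by
  rw [← mul_rpow (by positivity) (by linarith)]
  exact rpow_le_rpow_of_nonpos (mul_pos (lt_min hr one_pos) (by linarith))
    (min_mul_le_one_sub_rpow hr hx₀ hx₁.le) hκ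

end Real

theorem intervalIntegrable_rpow_mul_one_sub_rpow_s5 {e₁ e₂ : ℝ} (h₁ : -1 < e₁)
    (h₂ : -1 < e₂) :
    IntervalIntegrable (fun x : ℝ => x ^ e₁ * (1 - x) ^ e₂) volume 0 1 := by
  have left : IntervalIntegrable (fun x : ℝ => x ^ e₁ * (1 - x) ^ e₂) volume 0 (1 / 2) := by
    refine (intervalIntegrable_rpow' h₁).mul_continuousOn fun x hx => ?_
    rw [uIcc_of_le (by norm_num)] at hx
    exact ((continuousAt_const.sub continuousAt_id).rpow_const
      (Or.inl (show 1 - x ≠ 0 by linarith [hx.2]))).continuousWithinAt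
  have right : IntervalIntegrable (fun x : ℝ => x ^ e₁ * (1 - x) ^ e₂) volume (1 / 2) 1 := by
    have hsing : IntervalIntegrable (fun x : ℝ => (1 - x) ^ e₂) volume (1 / 2) 1 := by
      convert (intervalIntegrable_rpow' h₂ (a := 1 / 2) (b := 0)).comp_sub_left 1 using 1 <;>
        norm_num
    refine hsing.continuousOn_mul fun x hx => ?_
    rw [uIcc_of_le (by norm_num)] at hx
    exact (continuousAt_rpow_const _ _ (Or.inl (by linarith [hx.1]))).continuousWithinAt
  exact left.trans right

theorem intervalIntegrable_of_abs_le_rpow_mul_one_sub_rpow {f : ℝ → ℝ} {C e₁ e₂ : ℝ}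
    (hf : Measurable f) (h₁ : -1 < e₁) (h₂ : -1 < e₂)
    (hbound : ∀ x ∈ Ioo (0 : ℝ) 1, |f x| ≤ C * (x ^ e₁ * (1 - x) ^ e₂)) :
    IntervalIntegrable f volume 0 1 := by
  have hg := (intervalIntegrable_rpow_mul_one_sub_rpow_s5 h₁ h₂).const_mul C
  rw [intervalIntegrable_iff_integrableOn_Ioo_of_le zero_le_one] at hg ⊢
  refine hg.mono' hf.aestronglyMeasurable ?_
  filter_upwards [ae_restrict_mem measurableSet_Ioo] with x hx
  exact hbound x hx

theorem indicator_Iio_one_comp_rpow {r α β x : ℝ} (hr : 0 < r) (hx : 0 < x) :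
    (r * x ^ (r - 1)) • (Iio 1).indicator (fun t => t ^ (α - 1) * (1 - t) ^ (β - 1)) (x ^ r)
      = (Iio 1).indicator (fun x => r * x ^ (r * α - 1) * (1 - x ^ r) ^ (β - 1)) x := by
  by_cases hx₁ : x < 1
  · have hxr : x ^ r ∈ Iio 1 := rpow_lt_one hx.le hx₁ hr
    rw [indicator_of_mem hxr, indicator_of_mem (mem_Iio.2 hx₁), smul_eq_mul, ← rpow_mul hx.le,
      mul_assoc, ← mul_assoc (x ^ (r - 1)), ← rpow_add hx]
    ring_nf
  · have hxr : x ^ r ∉ Iio 1 := by rwa [mem_Iio, rpow_lt_one_iff' hx.le hr]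
    rw [indicator_of_notMem hxr, indicator_of_notMem (fun h => hx₁ (mem_Iio.1 h)), smul_zero]

theorem integral_comp_rpow_eq_betaReal {r : ℝ} (hr : 0 < r) (α β : ℝ) :
    ∫ x in (0:ℝ)..1, r * x ^ (r * α - 1) * (1 - x ^ r) ^ (β - 1) = betaReal α β := by
  have h := integral_comp_rpow_Ioi_of_pos (E := ℝ) hr
    (g := (Iio 1).indicator fun t => t ^ (α - 1) * (1 - t) ^ (β - 1))
  rw [setIntegral_congr_fun measurableSet_Ioi fun x hx => indicator_Iio_one_comp_rpow hr hx,
    setIntegral_indicator measurableSet_Iio, setIntegral_indicator measurableSet_Iio,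
    Ioi_inter_Iio] at h
  rw [betaReal, integral_of_le zero_le_one, integral_of_le zero_le_one,
    integral_Ioc_eq_integral_Ioo, integral_Ioc_eq_integral_Ioo, h]

theorem intervalIntegrable_comp_rpow_iff {r : ℝ} (hr : 0 < r) (α β : ℝ) :
    IntervalIntegrable (fun x => r * x ^ (r * α - 1) * (1 - x ^ r) ^ (β - 1)) volume 0 1 ↔
      IntervalIntegrable (fun t => t ^ (α - 1) * (1 - t) ^ (β - 1)) volume 0 1 := by
  have h := integrableOn_Ioi_comp_rpow_iff (E := ℝ)
    ((Iio 1).indicator fun t => t ^ (α - 1) * (1 - t) ^ (β - 1)) hr.ne'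
  rw [abs_of_pos hr, integrableOn_congr_fun
    (fun x (hx : x ∈ Ioi 0) => indicator_Iio_one_comp_rpow hr hx) measurableSet_Ioi,
    integrableOn_indicator_iff measurableSet_Iio,
    integrableOn_indicator_iff measurableSet_Iio, inter_comm, Ioi_inter_Iio] at h
  rwa [intervalIntegrable_iff_integrableOn_Ioo_of_le zero_le_one,
    intervalIntegrable_iff_integrableOn_Ioo_of_le zero_le_one]

noncomputable def twoPowerIntegrand (p q s : ℝ) : ℝ :=
  (-(5 - p) * (1 - s ^ ((p - 1)/2)) + (5 - q) * (1 - s ^ ((q - 1)/2)))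
    / (s ^ ((p - 1)/2) - s ^ ((q - 1)/2)) ^ ((3:ℝ)/2)

-- The integrand of `integral_comp_rpow_eq_betaReal` for `r = (q-p)/2`, `α = (7-3p)/(2(q-p))`,
-- `β = 1/2`.
noncomputable def twoPowerKernel (p q s : ℝ) : ℝ :=
  (q - p) / 2 * s ^ ((q - p) / 2 * ((7 - 3 * p) / (2 * (q - p))) - 1)
    * (1 - s ^ ((q - p) / 2)) ^ ((1:ℝ) / 2 - 1)

noncomputable def twoPowerAntideriv (p q s : ℝ) : ℝ :=
  4 * (s ^ ((5 - p) / 4) - s ^ ((7 - 3 * p) / 4)) * (1 - s ^ ((q - p) / 2)) ^ (-(1 / 2) : ℝ)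

section TwoPower

variable {p q : ℝ}

theorem twoPowerIntegrand_eq_mul_rpow (hpq : p < q) {s : ℝ} (hs : s ∈ Ioo (0:ℝ) 1) :
    twoPowerIntegrand p q s =
      (-(5 - p) * (1 - s ^ ((p - 1)/2)) + (5 - q) * (1 - s ^ ((q - 1)/2)))
        * (s ^ ((7 - 3 * p) / 4 - 1) * (1 - s ^ ((q - p) / 2)) ^ (-(3 / 2) : ℝ)) := by
  obtain ⟨hs₀, hs₁⟩ := hs
  have hw : 0 ≤ 1 - s ^ ((q - p) / 2) :=
    sub_nonneg.2 (rpow_le_one hs₀.le hs₁.le (by linarith))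
  have hden : s ^ ((p - 1)/2) - s ^ ((q - 1)/2)
      = s ^ ((p - 1)/2) * (1 - s ^ ((q - p) / 2)) := by
    rw [mul_one_sub, ← rpow_add hs₀]
    ring_nf
  rw [twoPowerIntegrand, div_eq_mul_inv, hden, mul_rpow (by positivity) hw, mul_inv,
    ← rpow_mul hs₀.le, ← rpow_neg hs₀.le, ← rpow_neg hw]
  ring_nf

theorem twoPowerKernel_eq (hpq : p < q) (s : ℝ) :
    twoPowerKernel p q s =
      (q - p) / 2 * s ^ ((7 - 3 * p) / 4 - 1) * (1 - s ^ ((q - p) / 2)) ^ (-(1 / 2) : ℝ) := by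
  have : (q - p) / 2 * ((7 - 3 * p) / (2 * (q - p))) = (7 - 3 * p) / 4 := by
    field_simp [(sub_pos.2 hpq).ne']
    ring
  rw [twoPowerKernel, this]
  norm_num

theorem hasDerivAt_twoPowerAntideriv (hpq : p < q) {s : ℝ} (hs : s ∈ Ioo (0:ℝ) 1) :
    HasDerivAt (twoPowerAntideriv p q)
      (twoPowerIntegrand p q s - 2 * ((7 - 2 * p - q) / (q - p)) * twoPowerKernel p q s) s := by
  obtain ⟨hs₀, hs₁⟩ := hs
  have hw : 0 < 1 - s ^ ((q - p) / 2) := sub_pos.2 (rpow_lt_one hs₀.le hs₁ (by linarith))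
  have hsplit : ∀ e e₁ e₂ : ℝ, e = e₁ + e₂ → s ^ e = s ^ e₁ * s ^ e₂ :=
    fun e e₁ e₂ h => h ▸ rpow_add hs₀ e₁ e₂
  have hd := (((hasDerivAt_rpow_const (p := (5 - p) / 4) (Or.inl hs₀.ne')).sub
    (hasDerivAt_rpow_const (p := (7 - 3 * p) / 4) (Or.inl hs₀.ne'))).const_mul 4).mul
    (((hasDerivAt_rpow_const (p := (q - p) / 2) (Or.inl hs₀.ne')).const_sub 1).rpow_const
      (p := -(1 / 2)) (Or.inl hw.ne'))
  refine hd.congr_deriv ?_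
  -- Written through `s^((7-3p)/4-1)`, `s^((p-1)/2)`, `s^((q-p)/2)`, `(1 - s^((q-p)/2))^(-3/2)`
  -- and `s`, both sides are rational functions of these atoms.
  rw [Pi.sub_apply, twoPowerIntegrand_eq_mul_rpow hpq ⟨hs₀, hs₁⟩, twoPowerKernel_eq hpq,
    hsplit ((5 - p) / 4 - 1) ((7 - 3 * p) / 4 - 1) ((p - 1) / 2) (by ring),
    hsplit ((5 - p) / 4) ((7 - 3 * p) / 4) ((p - 1) / 2) (by ring),
    hsplit ((7 - 3 * p) / 4) ((7 - 3 * p) / 4 - 1) 1 (by ring),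
    hsplit ((q - 1) / 2) ((p - 1) / 2) ((q - p) / 2) (by ring), rpow_one,
    rpow_sub_one hs₀.ne' ((q - p) / 2), show (-(1 / 2) - 1 : ℝ) = -(3 / 2) by norm_num,
    show (1 - s ^ ((q - p) / 2)) ^ (-(1 / 2) : ℝ)
      = (1 - s ^ ((q - p) / 2)) * (1 - s ^ ((q - p) / 2)) ^ (-(3 / 2) : ℝ) by
        rw [← rpow_one_add' hw.le (by norm_num)]; norm_num]
  field_simp [(sub_pos.2 hpq).ne']
  ring

theorem twoPowerAntideriv_zero (hp73 : p < 7 / 3) : twoPowerAntideriv p q 0 = 0 := by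
  rw [twoPowerAntideriv, zero_rpow (by linarith), zero_rpow (by linarith)]
  ring

theorem twoPowerAntideriv_one : twoPowerAntideriv p q 1 = 0 := by
  simp [twoPowerAntideriv]

theorem abs_twoPowerAntideriv_le (hp : 1 < p) (hpq : p < q) (hp73 : p < 7 / 3) {s : ℝ}
    (hs : s ∈ Ico (0:ℝ) 1) :
    |twoPowerAntideriv p q s|
      ≤ 4 * max ((p - 1) / 2) 1 * min ((q - p) / 2) 1 ^ (-(1 / 2) : ℝ)
        * (1 - s) ^ ((1:ℝ) / 2) := by
  obtain ⟨hs₀, hs₁⟩ := hs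
  have hH : twoPowerAntideriv p q s = -(4 * s ^ ((7 - 3 * p) / 4) * (1 - s ^ ((p - 1) / 2))
      * (1 - s ^ ((q - p) / 2)) ^ (-(1 / 2) : ℝ)) := by
    rw [twoPowerAntideriv, show s ^ ((5 - p) / 4) = s ^ ((7 - 3 * p) / 4) * s ^ ((p - 1) / 2) by
      rw [← rpow_add' hs₀ (by linarith)]; ring_nf]
    ring
  have hsqrt : (1 - s) ^ ((1:ℝ) / 2) = (1 - s) * (1 - s) ^ (-(1 / 2) : ℝ) := by
    rw [← rpow_one_add' (by linarith) (by norm_num)]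
    norm_num
  have hW : 0 ≤ (1 - s ^ ((q - p) / 2)) ^ (-(1 / 2) : ℝ) :=
    rpow_nonneg (sub_nonneg.2 (rpow_le_one hs₀ hs₁.le (by linarith))) _
  calc |twoPowerAntideriv p q s|
      = 4 * s ^ ((7 - 3 * p) / 4) * |1 - s ^ ((p - 1) / 2)|
          * (1 - s ^ ((q - p) / 2)) ^ (-(1 / 2) : ℝ) := by
        rw [hH, abs_neg, abs_mul, abs_mul, abs_mul, abs_of_pos four_pos,
          abs_of_nonneg (rpow_nonneg hs₀ _), abs_of_nonneg hW]
    _ ≤ 4 * 1 * (max ((p - 1) / 2) 1 * (1 - s))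
          * (min ((q - p) / 2) 1 ^ (-(1 / 2) : ℝ) * (1 - s) ^ (-(1 / 2) : ℝ)) := by
        have hA : s ^ ((7 - 3 * p) / 4) ≤ 1 := rpow_le_one hs₀ hs₁.le (by linarith)
        have ha := abs_one_sub_rpow_le (by linarith : 0 < (p - 1) / 2) hs₀ hs₁.le
        have hr := one_sub_rpow_rpow_le (κ := -(1 / 2)) (by linarith : 0 < (q - p) / 2)
          (by norm_num) hs₀ hs₁
        gcongr
    _ = _ := by rw [hsqrt]; ring

theorem continuousOn_twoPowerAntideriv (hp : 1 < p) (hpq : p < q) (hp73 : p < 7 / 3) :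
    ContinuousOn (twoPowerAntideriv p q) (Icc 0 1) := by
  have hr : 0 < (q - p) / 2 := by linarith
  rw [← Ico_insert_right zero_le_one]
  intro x hx
  rcases hx with rfl | ⟨hx₀, hx₁⟩
  · refine continuousWithinAt_insert_self.2 ?_
    set C := 4 * max ((p - 1) / 2) 1 * min ((q - p) / 2) 1 ^ (-(1 / 2) : ℝ)
    have hlim :
        Tendsto (fun s : ℝ => C * (1 - s) ^ ((1:ℝ) / 2)) (𝓝[Ico 0 1] 1) (𝓝 0) := by
      have : Continuous fun s : ℝ => C * (1 - s) ^ ((1:ℝ) / 2) :=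
        continuous_const.mul ((continuous_const.sub continuous_id).rpow_const
          fun _ => Or.inr (by norm_num))
      simpa using (this.tendsto 1).mono_left nhdsWithin_le_nhds
    rw [ContinuousWithinAt, twoPowerAntideriv_one]
    exact squeeze_zero_norm' (eventually_nhdsWithin_of_forall
      fun s hs => abs_twoPowerAntideriv_le hp hpq hp73 hs) hlim
  · have hw : 1 - x ^ ((q - p) / 2) ≠ 0 := (sub_pos.2 (rpow_lt_one hx₀ hx₁ hr)).ne'
    refine ContinuousAt.continuousWithinAt ?_
    exact (continuousAt_const.mul ((continuousAt_rpow_const _ _ (Or.inr (by linarith))).sub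
      (continuousAt_rpow_const _ _ (Or.inr (by linarith))))).mul
      ((continuousAt_const.sub (continuousAt_rpow_const _ _ (Or.inr hr.le))).rpow_const
        (Or.inl hw))

theorem intervalIntegrable_twoPowerIntegrand (hp : 1 < p) (hpq : p < q) (hp73 : p < 7 / 3) :
    IntervalIntegrable (twoPowerIntegrand p q) volume 0 1 := by
  set K := |5 - p| * max ((p - 1) / 2) 1 + |5 - q| * max ((q - 1) / 2) 1
  refine intervalIntegrable_of_abs_le_rpow_mul_one_sub_rpow
    (C := K * min ((q - p) / 2) 1 ^ (-(3 / 2) : ℝ)) (e₁ := (7 - 3 * p) / 4 - 1)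
    (e₂ := -(1 / 2))
    (by unfold twoPowerIntegrand; fun_prop) (by linarith) (by norm_num) fun s hs => ?_
  obtain ⟨hs₀, hs₁⟩ := hs
  have hN : |-(5 - p) * (1 - s ^ ((p - 1)/2)) + (5 - q) * (1 - s ^ ((q - 1)/2))|
      ≤ K * (1 - s) := by
    have ha := abs_one_sub_rpow_le (by linarith : 0 < (p - 1) / 2) hs₀.le hs₁.le
    have hb := abs_one_sub_rpow_le (by linarith : 0 < (q - 1) / 2) hs₀.le hs₁.le
    calc _ ≤ |-(5 - p) * (1 - s ^ ((p - 1)/2))| + |(5 - q) * (1 - s ^ ((q - 1)/2))| :=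
          abs_add_le _ _
      _ = |5 - p| * |1 - s ^ ((p - 1)/2)| + |5 - q| * |1 - s ^ ((q - 1)/2)| := by
          rw [abs_mul, abs_mul, abs_neg]
      _ ≤ |5 - p| * (max ((p - 1) / 2) 1 * (1 - s))
            + |5 - q| * (max ((q - 1) / 2) 1 * (1 - s)) := by
          gcongr
      _ = K * (1 - s) := by ring
  have hW := one_sub_rpow_rpow_le (κ := -(3 / 2)) (by linarith : 0 < (q - p) / 2)
    (by norm_num) hs₀.le hs₁
  have hW₀ : 0 ≤ (1 - s ^ ((q - p) / 2)) ^ (-(3 / 2) : ℝ) :=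
    rpow_nonneg (sub_nonneg.2 (rpow_le_one hs₀.le hs₁.le (by linarith))) _
  have hsqrt : (1 - s) ^ (-(1 / 2) : ℝ) = (1 - s) * (1 - s) ^ (-(3 / 2) : ℝ) := by
    rw [← rpow_one_add' (by linarith) (by norm_num)]
    norm_num
  rw [twoPowerIntegrand_eq_mul_rpow hpq ⟨hs₀, hs₁⟩, abs_mul,
    abs_of_nonneg (mul_nonneg (rpow_nonneg hs₀.le _) hW₀), hsqrt]
  calc _ ≤ K * (1 - s) * (s ^ ((7 - 3 * p) / 4 - 1)
          * (min ((q - p) / 2) 1 ^ (-(3 / 2) : ℝ) * (1 - s) ^ (-(3 / 2) : ℝ))) := by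
        gcongr
    _ = _ := by ring

theorem intervalIntegrable_twoPowerKernel (hpq : p < q) (hp73 : p < 7 / 3) :
    IntervalIntegrable (twoPowerKernel p q) volume 0 1 := by
  have hα : 0 < (7 - 3 * p) / (2 * (q - p)) := div_pos (by linarith) (by linarith)
  exact (intervalIntegrable_comp_rpow_iff (by linarith) _ _).2
    (intervalIntegrable_rpow_mul_one_sub_rpow_s5 (by linarith) (by norm_num))

end TwoPower

theorem two_power_integral (p q : ℝ) (hp : 1 < p) (hpq : p < q) (hp73 : p < 7/3) :
    (∫ s in (0:ℝ)..1,
        (-(5 - p) * (1 - s ^ ((p - 1)/2)) + (5 - q) * (1 - s ^ ((q - 1)/2)))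
          / (s ^ ((p - 1)/2) - s ^ ((q - 1)/2)) ^ ((3:ℝ)/2))
      = 2 * ((7 - 2*p - q) / (q - p)) * betaReal ((7 - 3*p) / (2*(q - p))) (1/2) := by
  set c := 2 * ((7 - 2 * p - q) / (q - p))
  have hφ := intervalIntegrable_twoPowerIntegrand hp hpq hp73
  have hψ := (intervalIntegrable_twoPowerKernel hpq hp73).const_mul c
  have hFTC : ∫ s in (0:ℝ)..1, (twoPowerIntegrand p q s - c * twoPowerKernel p q s) = 0 := by
    rw [integral_eq_sub_of_hasDerivAt_of_le zero_le_one
      (continuousOn_twoPowerAntideriv hp hpq hp73)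
      (fun s hs => hasDerivAt_twoPowerAntideriv hpq hs) (hφ.sub hψ),
      twoPowerAntideriv_one, twoPowerAntideriv_zero hp73, sub_zero]
  have hβ : ∫ s in (0:ℝ)..1, twoPowerKernel p q s = betaReal ((7 - 3*p) / (2*(q - p))) (1/2) :=
    integral_comp_rpow_eq_betaReal (by linarith) _ _
  rwa [integral_sub hφ hψ, intervalIntegral.integral_const_mul, hβ, sub_eq_zero] at hFTC
end

section
/- For all $b > 0$, $-\frac{1}{2b}B(b+\tfrac12, \tfrac12) < \frac{\partial}{\partial x}B(b+\tfrac12, \tfrac12) < -\frac{1}{2b+1}B(b+\tfrac12, \tfrac12)$, where the derivative of the Beta function $B(x, 1/2)$ is taken with respect to its first argument at $x = b + 1/2$. -/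
/-!
Write `B(x) = B(x, 1/2)` and `L(x) = ∂ₓB(x, 1/2) = ∫₀¹ t^(x-1) (1-t)^(-1/2) log t dt`.
The Gamma-function formula gives `B(x) B(x + 1/2) = π / x`, and differentiating this,
`L(x) B(x + 1/2) + B(x) L(x + 1/2) = -π / x²`. Chebyshev's integral inequality for the increasing
functions `t^(1/2)` and `log t` against the weight `t^(x-1) (1-t)^(-1/2)` says
`L(x) B(x + 1/2) < B(x) L(x + 1/2)`, so the first summand lies below and the second above
`-π / (2x²) = -B(x) B(x + 1/2) / (2x)`. Dividing by `B(x + 1/2)`, resp. `B(x)`, and taking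
`x = b + 1/2`, resp. `x = b`, gives the two bounds.
-/

open MeasureTheory

open Set Real

/-- Chebyshev's integral inequality: integrate `w x w y (f y - f x) (g y - g x) ≥ 0` on `μ × μ`. -/
theorem integral_mul_integral_lt_of_monovaryOn {α : Type*} [MeasurableSpace α] {μ : Measure α}
    [SFinite μ] {w f g : α → ℝ} {s : Set α} (hs : ∀ᵐ x ∂μ, x ∈ s) (hw : ∀ x ∈ s, 0 ≤ w x)
    (hfg : MonovaryOn f g s) (hw_int : Integrable w μ)
    (hwf : Integrable (fun x ↦ w x * f x) μ) (hwg : Integrable (fun x ↦ w x * g x) μ)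
    (hwfg : Integrable (fun x ↦ w x * f x * g x) μ) {A B : Set α} (hA : μ A ≠ 0) (hB : μ B ≠ 0)
    (hAB : ∀ x ∈ A, ∀ y ∈ B, 0 < w x ∧ 0 < w y ∧ f x < f y ∧ g x < g y) :
    (∫ x, w x * f x ∂μ) * (∫ x, w x * g x ∂μ) < (∫ x, w x ∂μ) * ∫ x, w x * f x * g x ∂μ := by
  set G : α × α → ℝ := fun p ↦ w p.1 * w p.2 * ((f p.2 - f p.1) * (g p.2 - g p.1))
  have hG : G = fun p ↦ (w p.1 * (w p.2 * f p.2 * g p.2) - (w p.1 * f p.1) * (w p.2 * g p.2))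
      + ((w p.1 * f p.1 * g p.1) * w p.2 - (w p.1 * g p.1) * (w p.2 * f p.2)) := by
    ext p; ring
  have i₁ := hw_int.mul_prod hwfg
  have i₂ := hwf.mul_prod hwg
  have i₃ := hwfg.mul_prod hw_int
  have i₄ := hwg.mul_prod hwf
  have hG_int : Integrable G (μ.prod μ) := hG ▸ (i₁.sub i₂).add (i₃.sub i₄)
  have hG_integral : ∫ p, G p ∂(μ.prod μ) = 2 * ((∫ x, w x ∂μ) * (∫ x, w x * f x * g x ∂μ)
      - (∫ x, w x * f x ∂μ) * ∫ x, w x * g x ∂μ) := by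
    rw [hG, integral_add, integral_sub i₁ i₂, integral_sub i₃ i₄]
    · rw [integral_prod_mul w (fun x ↦ w x * f x * g x),
        integral_prod_mul (fun x ↦ w x * f x) (fun x ↦ w x * g x),
        integral_prod_mul (fun x ↦ w x * f x * g x) w,
        integral_prod_mul (fun x ↦ w x * g x) (fun x ↦ w x * f x)]
      ring
    exacts [i₁.sub i₂, i₃.sub i₄]
  have hG_nonneg : 0 ≤ᵐ[μ.prod μ] G := by
    filter_upwards [Measure.quasiMeasurePreserving_fst.ae hs,
      Measure.quasiMeasurePreserving_snd.ae hs] with p h₁ h₂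
    exact mul_nonneg (mul_nonneg (hw _ h₁) (hw _ h₂)) (monovaryOn_iff_forall_mul_nonneg.1 hfg h₁ h₂)
  have hG_pos : 0 < ∫ p, G p ∂(μ.prod μ) := by
    refine (integral_pos_iff_support_of_nonneg_ae hG_nonneg hG_int).2 ?_
    have hAB_sub : A ×ˢ B ⊆ Function.support G := fun p hp ↦ by
      obtain ⟨hwx, hwy, hf, hg⟩ := hAB p.1 hp.1 p.2 hp.2
      exact (mul_pos (mul_pos hwx hwy) (mul_pos (sub_pos.2 hf) (sub_pos.2 hg))).ne'
    refine (pos_iff_ne_zero.2 ?_).trans_le (measure_mono hAB_sub)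
    rw [Measure.prod_prod]
    exact mul_ne_zero hA hB
  linarith

noncomputable def betaRealDerivLeft (x y : ℝ) : ℝ :=
  ∫ t in (0:ℝ)..1, t ^ (x - 1) * (1 - t) ^ (y - 1) * log t

variable {x y : ℝ}

theorem ofReal_betaReal_integrand {t : ℝ} (ht : t ∈ Icc 0 1) :
    ((t ^ (x - 1) * (1 - t) ^ (y - 1) : ℝ) : ℂ) =
      (t : ℂ) ^ (x - 1 : ℂ) * (1 - t : ℂ) ^ (y - 1 : ℂ) := by
  rw [Complex.ofReal_mul, Complex.ofReal_cpow ht.1, Complex.ofReal_cpow (sub_nonneg.2 ht.2)]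
  push_cast
  rfl

theorem ofReal_betaReal (x y : ℝ) : (betaReal x y : ℂ) = Complex.betaIntegral x y := by
  rw [betaReal, ← intervalIntegral.integral_ofReal]
  refine intervalIntegral.integral_congr fun t ht ↦ ?_
  rw [uIcc_of_le zero_le_one] at ht
  exact ofReal_betaReal_integrand ht

theorem intervalIntegrable_betaReal (hx : 0 < x) (hy : 0 < y) :
    IntervalIntegrable (fun t ↦ t ^ (x - 1) * (1 - t) ^ (y - 1)) volume 0 1 := by
  have h := (Complex.betaIntegral_convergent (u := x) (v := y) (by simpa) (by simpa)).norm
  refine h.congr fun t ht ↦ ?_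
  rw [uIoc_of_le zero_le_one] at ht
  rw [← ofReal_betaReal_integrand (Ioc_subset_Icc_self ht), Complex.norm_real, norm_of_nonneg]
  exact mul_nonneg (rpow_nonneg ht.1.le _) (rpow_nonneg (sub_nonneg.2 ht.2) _)

theorem intervalIntegrable_betaRealDerivLeft (hx : 0 < x) (hy : 0 < y) :
    IntervalIntegrable (fun t ↦ t ^ (x - 1) * (1 - t) ^ (y - 1) * log t) volume 0 1 := by
  refine ((intervalIntegrable_betaReal (half_pos hx) hy).const_mul (1 / (x / 2))).mono_fun'
    (by fun_prop) ?_
  rw [uIoc_of_le zero_le_one]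
  refine (ae_restrict_mem measurableSet_Ioc).mono fun t ht ↦ ?_
  have hw : 0 ≤ t ^ (x / 2 - 1) * (1 - t) ^ (y - 1) :=
    mul_nonneg (rpow_nonneg ht.1.le _) (rpow_nonneg (sub_nonneg.2 ht.2) _)
  have hsplit : t ^ (x - 1) = t ^ (x / 2 - 1) * t ^ (x / 2) := by
    rw [← rpow_add ht.1]; ring_nf
  calc ‖t ^ (x - 1) * (1 - t) ^ (y - 1) * log t‖
      = t ^ (x / 2 - 1) * (1 - t) ^ (y - 1) * |log t * t ^ (x / 2)| := by
        rw [hsplit, norm_eq_abs, ← abs_of_nonneg hw, ← abs_mul]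
        ring_nf
    _ ≤ 1 / (x / 2) * (t ^ (x / 2 - 1) * (1 - t) ^ (y - 1)) := by
        rw [mul_comm]
        exact mul_le_mul_of_nonneg_right
          (abs_log_mul_self_rpow_lt t _ ht.1 ht.2 (half_pos hx)).le hw

theorem hasDerivAt_betaReal_left (hx : 0 < x) (hy : 0 < y) :
    HasDerivAt (fun x ↦ betaReal x y) (betaRealDerivLeft x y) x := by
  refine (intervalIntegral.hasDerivAt_integral_of_dominated_loc_of_deriv_le
    (F' := fun x t ↦ t ^ (x - 1) * (1 - t) ^ (y - 1) * log t)
    (bound := fun t ↦ ‖t ^ (x / 2 - 1) * (1 - t) ^ (y - 1) * log t‖)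
    (Metric.ball_mem_nhds x (half_pos hx)) (.of_forall fun _ ↦ by fun_prop)
    (intervalIntegrable_betaReal hx hy) (by fun_prop) ?_
    (intervalIntegrable_betaRealDerivLeft (half_pos hx) hy).norm ?_).2
  all_goals
    rw [uIoc_of_le zero_le_one]
    refine .of_forall fun t ht x' hx' ↦ ?_
  · have hx'_ge : x / 2 - 1 ≤ x' - 1 := by
      rw [Metric.mem_ball, dist_eq, abs_lt] at hx'; linarith
    simp only [mul_assoc, norm_mul, norm_of_nonneg (rpow_nonneg ht.1.le _)]
    exact mul_le_mul_of_nonneg_right (rpow_le_rpow_of_exponent_ge ht.1 ht.2 hx'_ge) (by positivity)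
  · refine ((((hasDerivAt_id x').sub_const 1).const_rpow ht.1).mul_const
      ((1 - t) ^ (y - 1))).congr_deriv ?_
    simp only [id]
    ring

theorem betaReal_pos (hx : 0 < x) (hy : 0 < y) : 0 < betaReal x y :=
  intervalIntegral.intervalIntegral_pos_of_pos_on (intervalIntegrable_betaReal hx hy)
    (fun _ ht ↦ mul_pos (rpow_pos_of_pos ht.1 _) (rpow_pos_of_pos (sub_pos.2 ht.2) _)) zero_lt_one

theorem betaReal_eq_Gamma_mul_div (hx : 0 < x) (hy : 0 < y) :
    betaReal x y = Gamma x * Gamma y / Gamma (x + y) := by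
  apply Complex.ofReal_injective
  rw [ofReal_betaReal, Complex.betaIntegral_eq_Gamma_mul_div _ _ (by simpa) (by simpa)]
  push_cast [← Complex.ofReal_add, Complex.Gamma_ofReal]
  rfl

theorem betaReal_mul_betaReal_add_half (hx : 0 < x) :
    betaReal x (1 / 2) * betaReal (x + 1 / 2) (1 / 2) = π / x := by
  rw [betaReal_eq_Gamma_mul_div hx one_half_pos,
    betaReal_eq_Gamma_mul_div (by positivity) one_half_pos, add_assoc, add_halves,
    Gamma_add_one hx.ne', Gamma_one_half_eq]
  have := Gamma_pos_of_pos hx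
  have := Gamma_pos_of_pos (by positivity : 0 < x + 1 / 2)
  field_simp
  rw [sq_sqrt pi_pos.le]

theorem betaRealDerivLeft_mul_add_mul_betaRealDerivLeft (hx : 0 < x) :
    betaRealDerivLeft x (1 / 2) * betaReal (x + 1 / 2) (1 / 2)
      + betaReal x (1 / 2) * betaRealDerivLeft (x + 1 / 2) (1 / 2) = -(π / x ^ 2) := by
  have hprod := (hasDerivAt_betaReal_left hx one_half_pos).mul
    ((hasDerivAt_betaReal_left (by positivity) one_half_pos).comp_add_const x (1 / 2))
  have hquot := (hasDerivAt_inv hx.ne').const_mul π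
  have heq : (fun x ↦ betaReal x (1 / 2) * betaReal (x + 1 / 2) (1 / 2)) =ᶠ[nhds x]
      fun x ↦ π * x⁻¹ :=
    Filter.eventually_of_mem (Ioi_mem_nhds hx) fun x' hx' ↦ betaReal_mul_betaReal_add_half hx'
  rw [hprod.unique (hquot.congr_of_eventuallyEq heq)]
  ring

theorem betaReal_integrand_mul_rpow {t : ℝ} (ht : 0 < t) (h : ℝ) :
    t ^ (x - 1) * (1 - t) ^ (y - 1) * t ^ h = t ^ (x + h - 1) * (1 - t) ^ (y - 1) := by
  rw [mul_right_comm, ← rpow_add ht]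
  ring_nf

theorem betaRealDerivLeft_mul_betaReal_lt {h : ℝ} (hx : 0 < x) (hy : 0 < y) (hh : 0 < h) :
    betaRealDerivLeft x y * betaReal (x + h) y < betaReal x y * betaRealDerivLeft (x + h) y := by
  set μ := volume.restrict (Ioc (0 : ℝ) 1)
  have hint : ∀ {z : ℝ}, 0 < z → Integrable (fun t : ℝ ↦ t ^ (z - 1) * (1 - t) ^ (y - 1)) μ :=
    fun hz ↦ (intervalIntegrable_iff_integrableOn_Ioc_of_le zero_le_one).1
      (intervalIntegrable_betaReal hz hy)
  have hint_log : ∀ {z : ℝ}, 0 < z →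
      Integrable (fun t : ℝ ↦ t ^ (z - 1) * (1 - t) ^ (y - 1) * log t) μ :=
    fun hz ↦ (intervalIntegrable_iff_integrableOn_Ioc_of_le zero_le_one).1
      (intervalIntegrable_betaRealDerivLeft hz hy)
  have hshift_ae : (fun t : ℝ ↦ t ^ (x - 1) * (1 - t) ^ (y - 1) * t ^ h)
      =ᵐ[μ] fun t ↦ t ^ (x + h - 1) * (1 - t) ^ (y - 1) :=
    (ae_restrict_mem measurableSet_Ioc).mono fun _ ht ↦ betaReal_integrand_mul_rpow ht.1 h
  have hshift_log_ae : (fun t : ℝ ↦ t ^ (x - 1) * (1 - t) ^ (y - 1) * t ^ h * log t)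
      =ᵐ[μ] fun t ↦ t ^ (x + h - 1) * (1 - t) ^ (y - 1) * log t :=
    (ae_restrict_mem measurableSet_Ioc).mono fun t ht ↦
      congrArg (· * log t) (betaReal_integrand_mul_rpow ht.1 h)
  have hvol : ∀ {a b : ℝ}, 0 ≤ a → a < b → b ≤ 1 → μ (Ioo a b) ≠ 0 := fun ha hab hb ↦ by
    rw [Measure.restrict_apply measurableSet_Ioo,
      inter_eq_left.2 (Ioo_subset_Ioc_self.trans (Ioc_subset_Ioc ha hb)), Real.volume_Ioo]
    simpa using hab
  have key := integral_mul_integral_lt_of_monovaryOn (μ := μ)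
    (w := fun t ↦ t ^ (x - 1) * (1 - t) ^ (y - 1)) (f := fun t ↦ t ^ h) (g := log)
    (ae_restrict_mem measurableSet_Ioc)
    (fun t ht ↦ mul_nonneg (rpow_nonneg ht.1.le _) (rpow_nonneg (sub_nonneg.2 ht.2) _))
    (((monotoneOn_rpow_Ici_of_exponent_nonneg hh.le).mono fun _ ht ↦ ht.1.le).monovaryOn
      (strictMonoOn_log.monotoneOn.mono fun _ ht ↦ ht.1))
    (hint hx) ((hint (add_pos hx hh)).congr hshift_ae.symm) (hint_log hx)
    ((hint_log (add_pos hx hh)).congr hshift_log_ae.symm)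
    (hvol le_rfl one_half_pos (by norm_num)) (hvol (by norm_num) one_half_lt_one le_rfl)
    fun s hs t ht ↦ ⟨mul_pos (rpow_pos_of_pos hs.1 _) (rpow_pos_of_pos (by linarith [hs.2]) _),
      mul_pos (rpow_pos_of_pos (by linarith [ht.1]) _) (rpow_pos_of_pos (sub_pos.2 ht.2) _),
      rpow_lt_rpow hs.1.le (hs.2.trans ht.1) hh, log_lt_log hs.1 (hs.2.trans ht.1)⟩
  rw [integral_congr_ae hshift_ae, integral_congr_ae hshift_log_ae] at key
  simp only [betaReal, betaRealDerivLeft, intervalIntegral.integral_of_le zero_le_one]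
  linarith

theorem betaRealDerivLeft_half_bounds (hx : 0 < x) :
    -(1 / (2 * x)) * betaReal (x + 1 / 2) (1 / 2) < betaRealDerivLeft (x + 1 / 2) (1 / 2) ∧
      betaRealDerivLeft x (1 / 2) < -(1 / (2 * x)) * betaReal x (1 / 2) := by
  have hsum := betaRealDerivLeft_mul_add_mul_betaRealDerivLeft hx
  have hlt := betaRealDerivLeft_mul_betaReal_lt hx one_half_pos one_half_pos
  have hprod : -(1 / (2 * x)) * (betaReal x (1 / 2) * betaReal (x + 1 / 2) (1 / 2))
      = -(π / x ^ 2) / 2 := by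
    rw [betaReal_mul_betaReal_add_half hx]
    field_simp
  constructor
  · refine lt_of_mul_lt_mul_right ?_ (betaReal_pos hx one_half_pos).le
    linarith
  · refine lt_of_mul_lt_mul_right ?_
      (betaReal_pos (x := x + 1 / 2) (by positivity) one_half_pos).le
    linarith

theorem beta_deriv_bounds (b : ℝ) (hb : 0 < b) :
    -(1 / (2*b)) * betaReal (b + 1/2) (1/2)
        < deriv (fun x : ℝ => betaReal x (1/2)) (b + 1/2) ∧
      deriv (fun x : ℝ => betaReal x (1/2)) (b + 1/2)
        < -(1 / (2*b + 1)) * betaReal (b + 1/2) (1/2) := by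
  rw [(hasDerivAt_betaReal_left (by positivity) one_half_pos).deriv]
  refine ⟨(betaRealDerivLeft_half_bounds hb).1, ?_⟩
  convert (betaRealDerivLeft_half_bounds (x := b + 1 / 2) (by positivity)).2 using 4
  ring
end

section
/- For all $b > 0$, $\frac{1}{2b+1} < \psi(b+1) - \psi(b+\tfrac12) < \frac{1}{2b}$, where $\psi$ is the digamma function. -/
/-! The gap `D x = ψ(x + 1) - ψ(x + 1/2)` satisfies `D x - D (x + 1) = 1/(x + 1/2) - 1/(x + 1)`
by the functional equation `ψ(x + 1) = ψ x + 1/x`, and `D x → 0` because `0 ≤ D x ≤ 1/x` by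
monotonicity of `ψ` (log-convexity of `Γ`). The bounds `1/(2x + 1)` and `1/(2x)` also tend to `0`,
and their one-step decrements are respectively smaller and larger than that of `D`; so
`D - 1/(2x + 1)` and `1/(2x) - D` strictly decrease along `x, x + 1, x + 2, …` to `0`, hence are
positive. -/

noncomputable def digamma (x : ℝ) : ℝ := deriv Real.Gamma x / Real.Gamma x

open Real Set Filter Topology

lemma ne_neg_natCast_of_pos {x : ℝ} (hx : 0 < x) (m : ℕ) : x ≠ -m :=
  ((neg_nonpos.mpr m.cast_nonneg).trans_lt hx).ne'

lemma digamma_add_one {x : ℝ} (hx : ∀ m : ℕ, x ≠ -m) : digamma (x + 1) = digamma x + x⁻¹ := by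
  have hx0 : x ≠ 0 := by simpa using hx 0
  have hderiv : deriv Gamma (x + 1) = Gamma x + x * deriv Gamma x := by
    have hmul : (fun y ↦ Gamma (y + 1)) =ᶠ[𝓝 x] fun y ↦ y * Gamma y := by
      filter_upwards [eventually_ne_nhds hx0] with y hy using Gamma_add_one hy
    rw [← deriv_comp_add_const, hmul.deriv_eq,
      deriv_fun_mul differentiableAt_fun_id (differentiableAt_Gamma hx), deriv_id'', one_mul]
  rw [digamma, digamma, hderiv, Gamma_add_one hx0]
  field_simp [Gamma_ne_zero hx]
  ring

lemma digamma_eq_deriv_log_Gamma {x : ℝ} (hx : 0 < x) : digamma x = deriv (log ∘ Gamma) x := by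
  rw [Function.comp_def, deriv.log (differentiableAt_Gamma (ne_neg_natCast_of_pos hx))
    (Gamma_pos_of_pos hx).ne', digamma]

lemma digamma_monotoneOn : MonotoneOn digamma (Ioi 0) :=
  (convexOn_log_Gamma.monotoneOn_deriv fun _ hx ↦
    (differentiableAt_Gamma (ne_neg_natCast_of_pos hx)).log (Gamma_pos_of_pos hx).ne').congr
    fun _ hx ↦ (digamma_eq_deriv_log_Gamma hx).symm

noncomputable def digammaHalfDiff (x : ℝ) : ℝ := digamma (x + 1) - digamma (x + 1 / 2)

lemma digammaHalfDiff_nonneg {x : ℝ} (hx : -(1 / 2) < x) : 0 ≤ digammaHalfDiff x :=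
  sub_nonneg.2 <| digamma_monotoneOn (by simp; linarith) (by simp; linarith) (by linarith)

lemma digammaHalfDiff_le_inv {x : ℝ} (hx : 0 < x) : digammaHalfDiff x ≤ x⁻¹ := by
  have hshift := digamma_add_one (ne_neg_natCast_of_pos hx)
  have hmono : digamma x ≤ digamma (x + 1 / 2) :=
    digamma_monotoneOn hx (by simp; linarith) (by linarith)
  rw [digammaHalfDiff]
  linarith

lemma tendsto_digammaHalfDiff_atTop : Tendsto digammaHalfDiff atTop (𝓝 0) :=
  squeeze_zero' (eventually_gt_atTop 0 |>.mono fun _ hx ↦ digammaHalfDiff_nonneg (by linarith))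
    (eventually_gt_atTop 0 |>.mono fun _ hx ↦ digammaHalfDiff_le_inv hx) tendsto_inv_atTop_zero

lemma digammaHalfDiff_sub_add_one {x : ℝ} (hx : -(1 / 2) < x) :
    digammaHalfDiff x - digammaHalfDiff (x + 1) = (x + 1 / 2)⁻¹ - (x + 1)⁻¹ := by
  have h₁ := digamma_add_one (ne_neg_natCast_of_pos (show 0 < x + 1 by linarith))
  have h₂ := digamma_add_one (ne_neg_natCast_of_pos (show 0 < x + 1 / 2 by linarith))
  rw [digammaHalfDiff, digammaHalfDiff, show x + 1 + 1 / 2 = x + 1 / 2 + 1 by ring]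
  linarith

lemma digammaHalfDiff_sub_inv_add_one_lt {x : ℝ} (hx : 0 < x) :
    digammaHalfDiff (x + 1) - (2 * (x + 1) + 1)⁻¹ < digammaHalfDiff x - (2 * x + 1)⁻¹ := by
  have hstep := digammaHalfDiff_sub_add_one (x := x) (by linarith)
  have hdecr : (2 * x + 1)⁻¹ - (2 * (x + 1) + 1)⁻¹ < (x + 1 / 2)⁻¹ - (x + 1)⁻¹ := by
    rw [← sub_pos]
    field_simp
    ring_nf
    positivity
  linarith

lemma inv_sub_digammaHalfDiff_add_one_lt {x : ℝ} (hx : 0 < x) :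
    (2 * (x + 1))⁻¹ - digammaHalfDiff (x + 1) < (2 * x)⁻¹ - digammaHalfDiff x := by
  have hstep := digammaHalfDiff_sub_add_one (x := x) (by linarith)
  have hdecr : (x + 1 / 2)⁻¹ - (x + 1)⁻¹ < (2 * x)⁻¹ - (2 * (x + 1))⁻¹ := by
    rw [← sub_pos]
    field_simp
    ring_nf
    positivity
  linarith

lemma pos_of_add_one_lt_of_tendsto_zero {f : ℝ → ℝ} {x : ℝ}
    (hstep : ∀ y, x ≤ y → f (y + 1) < f y) (hf : Tendsto f atTop (𝓝 0)) : 0 < f x := by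
  have hanti : StrictAnti fun n : ℕ ↦ f (x + n) := strictAnti_nat_of_succ_lt fun n ↦ by
    simpa [add_assoc] using hstep (x + n) (by simp)
  have hlim : Tendsto (fun n : ℕ ↦ f (x + n)) atTop (𝓝 0) :=
    hf.comp (tendsto_atTop_add_const_left _ x tendsto_natCast_atTop_atTop)
  simpa using (hanti.antitone.le_of_tendsto hlim 1).trans_lt (hanti zero_lt_one)

theorem digamma_half_bounds (b : ℝ) (hb : 0 < b) :
    1 / (2*b + 1) < digamma (b + 1) - digamma (b + 1/2) ∧
      digamma (b + 1) - digamma (b + 1/2) < 1 / (2*b) := by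
  change 1 / (2 * b + 1) < digammaHalfDiff b ∧ digammaHalfDiff b < 1 / (2 * b)
  rw [one_div, one_div]
  have hinv (c : ℝ) : Tendsto (fun x : ℝ ↦ (2 * x + c)⁻¹) atTop (𝓝 0) :=
    tendsto_inv_atTop_zero.comp
      (tendsto_atTop_add_const_right _ c (tendsto_id.const_mul_atTop two_pos))
  constructor
  · refine sub_pos.1 (pos_of_add_one_lt_of_tendsto_zero
      (f := fun x ↦ digammaHalfDiff x - (2 * x + 1)⁻¹)
      (fun x hx ↦ digammaHalfDiff_sub_inv_add_one_lt (hb.trans_le hx)) ?_)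
    simpa using tendsto_digammaHalfDiff_atTop.sub (hinv 1)
  · refine sub_pos.1 (pos_of_add_one_lt_of_tendsto_zero
      (f := fun x ↦ (2 * x)⁻¹ - digammaHalfDiff x)
      (fun x hx ↦ inv_sub_digammaHalfDiff_add_one_lt (hb.trans_le hx)) ?_)
    simpa using (hinv 0).sub tendsto_digammaHalfDiff_atTop
end

section
/- Let $1 < p < q < r$, $a_1, a_3 \in \{-1,1\}$, $\omega > 0$, $\gamma \in \mathbb{R}$, and define $U(s) = \omega s - \frac{2a_1}{p+1}s^{\frac{p+1}{2}} + \frac{2\gamma}{q+1}s^{\frac{q+1}{2}} - \frac{2a_3}{r+1}s^{\frac{r+1}{2}}$ for $s \ge 0$. Suppose $b > 0$ satisfies $U(b) = U'(b) = 0$ and $U''(b) \ge 0$. Then $U(s) > 0$ for all $s \in (0, b)$, i.e.~$b$ is the smallest positive zero of $U$. -/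
/-!
Write `U s = s * V s` with `V s = ω + c₁ s^α + c₂ s^β + c₃ s^δ`, `0 < α < β < δ`, `c₃ ≠ 0`.
Differentiating and factoring out the lowest power removes one term at a time (Descartes'
rule of signs for real exponents): `V' = s^(α-1) G` and `G' = s^(β-α-1) H` with
`H s = k + K s^(δ-β)`, `K ≠ 0`, strictly monotone. The conditions at `b` give `V b = G b = 0`
and `H b ≥ 0`. A monotone `H` with `H b ≥ 0` forces `G`, once nonpositive on `(0, b)`, to stay
negative up to `b`. So at any `s ∈ (0, b)` either `G < 0` on `(s, b)`, and `V` decreases to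
`V b = 0`, or `G > 0` on `(0, s)`, and `V` increases from `V 0 = ω > 0`; either way `V s > 0`.
-/

open Set Real Filter

section SignPattern

variable {f f' g h w : ℝ → ℝ} {u v b : ℝ}

lemma lt_of_hasDerivAt_pos (huv : u < v) (hc : ContinuousOn f (Icc u v))
    (hf : ∀ x ∈ Ioo u v, HasDerivAt f (f' x) x) (hpos : ∀ x ∈ Ioo u v, 0 < f' x) :
    f u < f v := by
  refine strictMonoOn_of_hasDerivWithinAt_pos (convex_Icc u v) hc (f' := f') ?_ ?_
    (left_mem_Icc.2 huv.le) (right_mem_Icc.2 huv.le) huv <;> rw [interior_Icc]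
  · exact fun x hx => (hf x hx).hasDerivWithinAt
  · exact hpos

lemma lt_of_hasDerivAt_neg (huv : u < v) (hc : ContinuousOn f (Icc u v))
    (hf : ∀ x ∈ Ioo u v, HasDerivAt f (f' x) x) (hneg : ∀ x ∈ Ioo u v, f' x < 0) :
    f v < f u := by
  refine strictAntiOn_of_hasDerivWithinAt_neg (convex_Icc u v) hc (f' := f') ?_ ?_
    (left_mem_Icc.2 huv.le) (right_mem_Icc.2 huv.le) huv <;> rw [interior_Icc]
  · exact fun x hx => (hf x hx).hasDerivWithinAt
  · exact hneg

lemma pos_or_neg_of_strictMonoOn_or_strictAntiOn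
    (hh : StrictMonoOn h (Ioi 0) ∨ StrictAntiOn h (Ioi 0)) (hhb : 0 ≤ h b)
    (hu : 0 < u) (huv : u < v) (hvb : v < b) :
    (∀ x ∈ Ioo v b, 0 < h x) ∨ (∀ x ∈ Ioo u v, h x < 0) := by
  have hv : 0 < v := hu.trans huv
  rcases hh with hmono | hanti
  · by_cases hhv : h v ≤ 0
    · exact Or.inr fun x hx =>
        (hmono (mem_Ioi.2 (hu.trans hx.1)) (mem_Ioi.2 hv) hx.2).trans_le hhv
    · exact Or.inl fun x hx =>
        (not_le.1 hhv).trans (hmono (mem_Ioi.2 hv) (mem_Ioi.2 (hv.trans hx.1)) hx.1)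
  · exact Or.inl fun x hx =>
      hhb.trans_lt (hanti (mem_Ioi.2 (hv.trans hx.1)) (mem_Ioi.2 (hv.trans hvb)) hx.2)

def StaysNegAfterNonpos (g : ℝ → ℝ) (b : ℝ) : Prop :=
  ∀ u v, 0 < u → u < v → v < b → g u ≤ 0 → g v < 0

lemma StaysNegAfterNonpos.of_hasDerivAt (hg : ∀ x > 0, HasDerivAt g (w x * h x) x)
    (hw : ∀ x > 0, 0 < w x) (hh : StrictMonoOn h (Ioi 0) ∨ StrictAntiOn h (Ioi 0))
    (hgb : g b = 0) (hhb : 0 ≤ h b) : StaysNegAfterNonpos g b := by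
  intro u v hu huv hvb hgu
  have hgc : ContinuousOn g (Ioi 0) := fun x hx => (hg x hx).continuousAt.continuousWithinAt
  have hv : 0 < v := hu.trans huv
  rcases pos_or_neg_of_strictMonoOn_or_strictAntiOn hh hhb hu huv hvb with hpos | hneg
  · refine hgb ▸ lt_of_hasDerivAt_pos hvb (hgc.mono fun x hx => hv.trans_le hx.1)
      (fun x hx => hg x (hv.trans hx.1)) fun x hx => mul_pos (hw x (hv.trans hx.1)) (hpos x hx)
  · refine (lt_of_hasDerivAt_neg huv (hgc.mono fun x hx => hu.trans_le hx.1)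
      (fun x hx => hg x (hu.trans hx.1)) fun x hx =>
        mul_neg_of_pos_of_neg (hw x (hu.trans hx.1)) (hneg x hx)).trans_le hgu

lemma StaysNegAfterNonpos.pos_of_hasDerivAt (hg : StaysNegAfterNonpos g b)
    (hf : ∀ x > 0, HasDerivAt f (w x * g x) x) (hw : ∀ x > 0, 0 < w x)
    (hc : ContinuousOn f (Ici 0)) (hf0 : 0 < f 0) (hfb : f b = 0) :
    ∀ u ∈ Ioo 0 b, 0 < f u := by
  rintro u ⟨hu, hub⟩
  by_cases hgu : g u ≤ 0
  · refine hfb ▸ lt_of_hasDerivAt_neg hub (hc.mono fun x hx => hu.le.trans hx.1)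
      (fun x hx => hf x (hu.trans hx.1)) fun x hx =>
        mul_neg_of_pos_of_neg (hw x (hu.trans hx.1)) (hg u x hu hx.1 hx.2 hgu)
  · have hgpos : ∀ x ∈ Ioo 0 u, 0 < g x := fun x hx => by
      by_contra hgx
      exact hgu (hg x u hx.1 hx.2 hub (not_lt.1 hgx)).le
    exact hf0.trans (lt_of_hasDerivAt_pos hu (hc.mono fun x hx => hx.1)
      (fun x hx => hf x hx.1) fun x hx => mul_pos (hw x hx.1) (hgpos x hx))

end SignPattern

noncomputable def powSum {ι : Type*} [Fintype ι] (c e : ι → ℝ) (s : ℝ) : ℝ := ∑ i, c i * s ^ e i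

section PowSum

variable {ι : Type*} [Fintype ι] (c e : ι → ℝ)

theorem hasDerivAt_powSum (a : ℝ) {s : ℝ} (hs : 0 < s) :
    HasDerivAt (powSum c e)
      (s ^ (a - 1) * powSum (fun i => c i * e i) (fun i => e i - a) s) s := by
  have hsum := HasDerivAt.fun_sum (u := Finset.univ) fun i _ =>
    (hasDerivAt_rpow_const (x := s) (p := e i) (Or.inl hs.ne')).const_mul (c i)
  refine hsum.congr_deriv ?_
  rw [powSum, Finset.mul_sum]
  refine Finset.sum_congr rfl fun i _ => ?_
  rw [show e i - 1 = (a - 1) + (e i - a) by ring, rpow_add hs]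
  ring

theorem continuous_powSum (he : ∀ i, 0 ≤ e i) : Continuous (powSum c e) :=
  continuous_finsetSum _ fun i _ => continuous_const.mul (continuous_rpow_const (he i))

end PowSum

theorem hasDerivAt_of_eq_mul_self {U V : ℝ → ℝ} {V' s : ℝ} (hU : ∀ x > 0, U x = x * V x)
    (hs : 0 < s) (hV : HasDerivAt V V' s) : HasDerivAt U (V s + s * V') s := by
  have hev : U =ᶠ[nhds s] fun x => x * V x :=
    eventually_of_mem (isOpen_Ioi.mem_nhds hs) hU
  simpa using ((hasDerivAt_id s).mul hV).congr_of_eventuallyEq hev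

theorem eq_zero_and_nonneg_of_double_zero {U V w₁ G H : ℝ → ℝ} {w₂ b : ℝ} (hb : 0 < b)
    (hU : ∀ x > 0, U x = x * V x) (hV : ∀ x > 0, HasDerivAt V (w₁ x * G x) x)
    (hw₁ : DifferentiableAt ℝ w₁ b) (hw₁b : 0 < w₁ b) (hG : HasDerivAt G (w₂ * H b) b)
    (hw₂ : 0 < w₂) (hUb : U b = 0) (hU'b : deriv U b = 0) (hU''b : 0 ≤ deriv (deriv U) b) :
    V b = 0 ∧ G b = 0 ∧ 0 ≤ H b := by
  have hVb : V b = 0 := by simpa [hUb, hb.ne'] using (hU b hb).symm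
  have hderiv : deriv U =ᶠ[nhds b] fun x => V x + x * (w₁ x * G x) :=
    eventually_of_mem (isOpen_Ioi.mem_nhds hb) fun x hx =>
      (hasDerivAt_of_eq_mul_self hU hx (hV x hx)).deriv
  have hGb : G b = 0 := by
    simpa [hVb, hb.ne', hw₁b.ne'] using hderiv.eq_of_nhds.symm.trans hU'b
  have hU'' := ((hV b hb).add ((hasDerivAt_id b).mul (hw₁.hasDerivAt.mul hG))).congr_of_eventuallyEq
    hderiv
  rw [hU''.deriv] at hU''b
  simp only [hGb, id_eq, Pi.mul_apply, mul_zero, zero_add] at hU''b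
  refine ⟨hVb, hGb, (mul_nonneg_iff_of_pos_left (by positivity : 0 < b * w₁ b * w₂)).1 ?_⟩
  linarith

theorem strictMonoOn_or_strictAntiOn_add_mul_rpow {k K e : ℝ} (hK : K ≠ 0) (he : 0 < e) :
    StrictMonoOn (fun s => k + K * s ^ e) (Ioi 0) ∨
      StrictAntiOn (fun s => k + K * s ^ e) (Ioi 0) := by
  have hrpow := (strictMonoOn_rpow_Ici_of_exponent_pos he).mono (Ioi_subset_Ici_self (a := 0))
  rcases hK.lt_or_gt with hK | hK
  · exact Or.inr fun x hx y hy hxy => by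
      simpa using mul_lt_mul_of_neg_left (hrpow hx hy hxy) hK
  · exact Or.inl fun x hx y hy hxy => by
      simpa using mul_lt_mul_of_pos_left (hrpow hx hy hxy) hK

section FourTerms

variable {ω c₁ c₂ c₃ α β δ : ℝ}

theorem powSum_second_reduction :
    powSum (fun i => ![ω, c₁, c₂, c₃] i * ![0, α, β, δ] i * (![0, α, β, δ] i - α))
      (fun i => ![0, α, β, δ] i - α - (β - α)) =
    fun s => c₂ * β * (β - α) + c₃ * δ * (δ - α) * s ^ (δ - β) := by
  funext s
  simp only [powSum, Fin.sum_univ_four, Matrix.cons_val, mul_zero, zero_mul, sub_self, zero_add]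
  rw [rpow_zero, mul_one, show δ - α - (β - α) = δ - β by ring]

theorem powSum_apply_zero (hα : 0 < α) (hβ : 0 < β) (hδ : 0 < δ) :
    powSum ![ω, c₁, c₂, c₃] ![0, α, β, δ] 0 = ω := by
  simp [powSum, Fin.sum_univ_four, zero_rpow hα.ne', zero_rpow hβ.ne', zero_rpow hδ.ne']

theorem pos_of_double_zero_of_eq_mul_powSum {b : ℝ} {U : ℝ → ℝ} (hα : 0 < α) (hαβ : α < β)
    (hβδ : β < δ) (hω : 0 < ω) (hc₃ : c₃ ≠ 0) (hb : 0 < b)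
    (hU : ∀ s > 0, U s = s * powSum ![ω, c₁, c₂, c₃] ![0, α, β, δ] s)
    (hUb : U b = 0) (hU'b : deriv U b = 0) (hU''b : 0 ≤ deriv (deriv U) b) :
    ∀ s ∈ Ioo 0 b, 0 < U s := by
  set c : Fin 4 → ℝ := ![ω, c₁, c₂, c₃]
  set e : Fin 4 → ℝ := ![0, α, β, δ]
  have hV := fun s (hs : 0 < s) => hasDerivAt_powSum c e α hs
  have hG := fun s (hs : 0 < s) =>
    hasDerivAt_powSum (fun i => c i * e i) (fun i => e i - α) (β - α) hs
  have hH := strictMonoOn_or_strictAntiOn_add_mul_rpow (k := c₂ * β * (β - α))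
    (mul_ne_zero (mul_ne_zero hc₃ (hα.trans (hαβ.trans hβδ)).ne') (sub_pos.2 (hαβ.trans hβδ)).ne')
    (sub_pos.2 hβδ)
  rw [← powSum_second_reduction] at hH
  obtain ⟨hVb, hGb, hHb⟩ := eq_zero_and_nonneg_of_double_zero hb hU hV
    (differentiableAt_rpow_const_of_ne _ hb.ne') (rpow_pos_of_pos hb _) (hG b hb)
    (rpow_pos_of_pos hb _) hUb hU'b hU''b
  have he : ∀ i, 0 ≤ e i := by
    intro i
    fin_cases i <;> simp [e] <;> linarith
  have hGsign := StaysNegAfterNonpos.of_hasDerivAt hG (fun x hx => rpow_pos_of_pos hx _) hH hGb hHb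
  intro s hs
  rw [hU s hs.1]
  refine mul_pos hs.1 (hGsign.pos_of_hasDerivAt hV (fun x hx => rpow_pos_of_pos hx _)
    (continuous_powSum c e he).continuousOn ?_ hVb s hs)
  rwa [powSum_apply_zero hα (by linarith) (by linarith)]

end FourTerms

theorem smallest_positive_zero_of_U_general
    (p q r a₁ a₃ ω γ b : ℝ)
    (hp : 1 < p) (hpq : p < q) (hqr : q < r)
    (ha₃ : a₃ = -1 ∨ a₃ = 1)
    (hω : 0 < ω) (hb : 0 < b)
    (U : ℝ → ℝ)
    (hU : ∀ s : ℝ, U s = ω * s - 2 * a₁ / (p + 1) * s ^ ((p + 1)/2)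
        + 2 * γ / (q + 1) * s ^ ((q + 1)/2) - 2 * a₃ / (r + 1) * s ^ ((r + 1)/2))
    (hUb : U b = 0) (hU'b : deriv U b = 0) (hU''b : 0 ≤ deriv (deriv U) b) :
    ∀ s ∈ Ioo (0:ℝ) b, 0 < U s := by
  have hc₃ : -(2 * a₃ / (r + 1)) ≠ 0 := by
    have : 0 < r + 1 := by linarith
    rcases ha₃ with rfl | rfl <;> simp <;> linarith
  refine pos_of_double_zero_of_eq_mul_powSum (c₁ := -(2 * a₁ / (p + 1))) (c₂ := 2 * γ / (q + 1))
    (α := (p - 1) / 2) (β := (q - 1) / 2) (δ := (r - 1) / 2) (by linarith) (by linarith)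
    (by linarith) hω hc₃ hb (fun s hs => ?_) hUb hU'b hU''b
  have hsplit (x : ℝ) : s ^ ((x + 1) / 2) = s * s ^ ((x - 1) / 2) := by
    rw [show (x + 1) / 2 = 1 + (x - 1) / 2 by ring, rpow_add hs, rpow_one]
  simp only [hU, hsplit, powSum, Fin.sum_univ_four, Matrix.cons_val, rpow_zero, mul_one]
  ring

theorem smallest_positive_zero_of_U
    (p q r a₁ a₃ ω γ b : ℝ)
    (hp : 1 < p) (hpq : p < q) (hqr : q < r)
    (ha₁ : a₁ = -1 ∨ a₁ = 1) (ha₃ : a₃ = -1 ∨ a₃ = 1)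
    (hω : 0 < ω) (hb : 0 < b)
    (U : ℝ → ℝ)
    (hU : ∀ s : ℝ, U s = ω * s - 2 * a₁ / (p + 1) * s ^ ((p + 1)/2)
        + 2 * γ / (q + 1) * s ^ ((q + 1)/2) - 2 * a₃ / (r + 1) * s ^ ((r + 1)/2))
    (hUb : U b = 0) (hU'b : deriv U b = 0) (hU''b : 0 ≤ deriv (deriv U) b) :
    ∀ s ∈ Ioo (0:ℝ) b, 0 < U s :=
  smallest_positive_zero_of_U_general p q r a₁ a₃ ω γ b hp hpq hqr ha₃ hω hb U hU hUb hU'b hU''b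
end

section
/- Let $1 < p < q < r$ (FF case, $a_1 = a_3 = 1$) and define, for $a > 0$, $\omega_{\mathrm{ne}}(a) = \frac{2(q-p)}{(q-1)(p+1)}a^{\frac{p-1}{2}} - \frac{2(r-q)}{(q-1)(r+1)}a^{\frac{r-1}{2}}$ and $\gamma_{\mathrm{ne}}(a) = \frac{q+1}{q-1}\left(\frac{p-1}{p+1}a^{\frac{p-q}{2}} + \frac{r-1}{r+1}a^{\frac{r-q}{2}}\right)$. Let $a_\sharp > 0$ be defined by $a_\sharp^{\frac{r-p}{2}} = \frac{(q-p)(p-1)(r+1)}{(r-q)(r-1)(p+1)}$. Then for all $a \in (0, a_\sharp]$ we have $\omega_{\mathrm{ne}}(a) > 0$, $\omega_{\mathrm{ne}}'(a) \ge 0$, and $\gamma_{\mathrm{ne}}'(a) \le 0$. -/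
open Set

theorem FF_nonexistence_curve_monotone
    (p q r asharp : ℝ) (hp : 1 < p) (hpq : p < q) (hqr : q < r)
    (ωne γne : ℝ → ℝ)
    (hωne : ∀ a > (0:ℝ), ωne a = 2 * (q - p) / ((q - 1) * (p + 1)) * a ^ ((p - 1)/2)
        - 2 * (r - q) / ((q - 1) * (r + 1)) * a ^ ((r - 1)/2))
    (hγne : ∀ a > (0:ℝ), γne a = (q + 1) / (q - 1) *
        ((p - 1) / (p + 1) * a ^ ((p - q)/2) + (r - 1) / (r + 1) * a ^ ((r - q)/2)))
    (hsharp : 0 < asharp ∧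
      asharp ^ ((r - p)/2) = (q - p) * (p - 1) * (r + 1) / ((r - q) * (r - 1) * (p + 1))) :
    ∀ a : ℝ, 0 < a → a ≤ asharp →
      0 < ωne a ∧ 0 ≤ deriv ωne a ∧ deriv γne a ≤ 0 := by
  obtain ⟨hsh, hshval⟩ := hsharp
  intro a ha hale
  have ha' : a ≠ 0 := ne_of_gt ha
  have hq1 : (0:ℝ) < q - 1 := by linarith
  have hp1 : (0:ℝ) < p - 1 := by linarith
  have hr1 : (0:ℝ) < r - 1 := by linarith
  have hqp : (0:ℝ) < q - p := by linarith
  have hrq : (0:ℝ) < r - q := by linarith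
  have hp1' : (0:ℝ) < p + 1 := by linarith
  have hr1' : (0:ℝ) < r + 1 := by linarith
  have hq1' : (0:ℝ) < q + 1 := by linarith
  set E := a ^ ((r - p)/2) with hEdef
  have hEpos : 0 < E := Real.rpow_pos_of_pos ha _
  have hEle : E ≤ (q - p) * (p - 1) * (r + 1) / ((r - q) * (r - 1) * (p + 1)) := by
    rw [← hshval]
    exact Real.rpow_le_rpow ha.le hale (by linarith)
  have key : E * ((r - q) * (r - 1) * (p + 1)) ≤ (q - p) * (p - 1) * (r + 1) :=
    (le_div_iff₀ (by positivity)).mp hEle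
  -- Part 1 : ωne a > 0
  have hsplit1 : a ^ ((r - 1)/2) = a ^ ((p - 1)/2) * E := by
    rw [hEdef, ← Real.rpow_add ha]; congr 1; ring
  have hApos : 0 < a ^ ((p - 1)/2) := Real.rpow_pos_of_pos ha _
  have hωval : ωne a = a ^ ((p - 1)/2) *
      (((q - p) * (r + 1) - (r - q) * (p + 1) * E) * 2 / ((q - 1) * (p + 1) * (r + 1))) := by
    rw [hωne a ha, hsplit1]
    field_simp
  have hnum1 : 0 < (q - p) * (r + 1) - (r - q) * (p + 1) * E := by
    nlinarith [key, mul_pos hqp hr1', mul_pos (mul_pos hrq hp1') hEpos]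
  have h1 : 0 < ωne a := by
    rw [hωval]
    have : 0 < ((q - p) * (r + 1) - (r - q) * (p + 1) * E) * 2 / ((q - 1) * (p + 1) * (r + 1)) := by
      positivity
    exact mul_pos hApos this
  -- derivatives
  have hdω : HasDerivAt (fun x : ℝ => 2 * (q - p) / ((q - 1) * (p + 1)) * x ^ ((p - 1)/2)
        - 2 * (r - q) / ((q - 1) * (r + 1)) * x ^ ((r - 1)/2))
      (2 * (q - p) / ((q - 1) * (p + 1)) * ((p - 1)/2 * a ^ ((p - 1)/2 - 1))
        - 2 * (r - q) / ((q - 1) * (r + 1)) * ((r - 1)/2 * a ^ ((r - 1)/2 - 1))) a :=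
    ((Real.hasDerivAt_rpow_const (Or.inl ha')).const_mul _).sub
      ((Real.hasDerivAt_rpow_const (Or.inl ha')).const_mul _)
  have heqω : ωne =ᶠ[nhds a] fun x => 2 * (q - p) / ((q - 1) * (p + 1)) * x ^ ((p - 1)/2)
      - 2 * (r - q) / ((q - 1) * (r + 1)) * x ^ ((r - 1)/2) := by
    filter_upwards [Ioi_mem_nhds ha] with x hx using hωne x hx
  have hsplit2 : a ^ ((r - 1)/2 - 1) = a ^ ((p - 1)/2 - 1) * E := by
    rw [hEdef, ← Real.rpow_add ha]; congr 1; ring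
  have hBpos : 0 < a ^ ((p - 1)/2 - 1) := Real.rpow_pos_of_pos ha _
  have hderivω : deriv ωne a = a ^ ((p - 1)/2 - 1) *
      (((q - p) * (p - 1) * (r + 1) - (r - q) * (r - 1) * (p + 1) * E)
        / ((q - 1) * (p + 1) * (r + 1))) := by
    rw [heqω.deriv_eq, hdω.deriv, hsplit2]
    field_simp
  have h2 : 0 ≤ deriv ωne a := by
    rw [hderivω]
    apply mul_nonneg hBpos.le
    apply div_nonneg _ (by positivity)
    linarith [key]
  -- γ derivative
  have hdγ : HasDerivAt (fun x : ℝ => (q + 1) / (q - 1) *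
        ((p - 1) / (p + 1) * x ^ ((p - q)/2) + (r - 1) / (r + 1) * x ^ ((r - q)/2)))
      ((q + 1) / (q - 1) *
        ((p - 1) / (p + 1) * ((p - q)/2 * a ^ ((p - q)/2 - 1))
          + (r - 1) / (r + 1) * ((r - q)/2 * a ^ ((r - q)/2 - 1)))) a :=
    (((Real.hasDerivAt_rpow_const (Or.inl ha')).const_mul _).add
      ((Real.hasDerivAt_rpow_const (Or.inl ha')).const_mul _)).const_mul _
  have heqγ : γne =ᶠ[nhds a] fun x => (q + 1) / (q - 1) *
      ((p - 1) / (p + 1) * x ^ ((p - q)/2) + (r - 1) / (r + 1) * x ^ ((r - q)/2)) := by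
    filter_upwards [Ioi_mem_nhds ha] with x hx using hγne x hx
  have hsplit3 : a ^ ((r - q)/2 - 1) = a ^ ((p - q)/2 - 1) * E := by
    rw [hEdef, ← Real.rpow_add ha]; congr 1; ring
  have hCpos : 0 < a ^ ((p - q)/2 - 1) := Real.rpow_pos_of_pos ha _
  have hderivγ : deriv γne a = (q + 1) / (q - 1) * a ^ ((p - q)/2 - 1) *
      (((p - 1) * (p - q) * (r + 1) + (r - 1) * (r - q) * (p + 1) * E)
        / (2 * (p + 1) * (r + 1))) := by
    rw [heqγ.deriv_eq, hdγ.deriv, hsplit3]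
    field_simp
  have h3 : deriv γne a ≤ 0 := by
    rw [hderivγ]
    apply mul_nonpos_of_nonneg_of_nonpos (by positivity)
    apply div_nonpos_of_nonpos_of_nonneg _ (by positivity)
    linarith [key]
  exact ⟨h1, h2, h3⟩
end

section
/- Let $1 < p < q \le 5 < r$ and $\gamma > 0$. Suppose $a^* > 0$ satisfies the FD-case nonexistence relation $\gamma = \frac{q+1}{q-1}\left(\frac{p-1}{p+1}(a^*)^{\frac{p-q}{2}} - \frac{r-1}{r+1}(a^*)^{\frac{r-q}{2}}\right)$. Then for all $s \in (0,1)$, $\frac{5-p}{p+1}(1 - s^{\frac{p-1}{2}})(a^*)^{\frac{p-1}{2}} - \gamma\,\frac{5-q}{q+1}(1 - s^{\frac{q-1}{2}})(a^*)^{\frac{q-1}{2}} > 0$. -/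
open Set

theorem one_sub_rpow_div_le_one_sub_rpow_div {s a b : ℝ} (hs : 0 ≤ s) (hb : 0 < b)
    (hba : b ≤ a) : (1 - s ^ a) / a ≤ (1 - s ^ b) / b := by
  have ha : 0 < a := hb.trans_le hba
  -- Bernoulli's inequality for the exponent `a / b ≥ 1` at the base `s ^ b`
  have hbern : 1 + a / b * (s ^ b - 1) ≤ (1 + (s ^ b - 1)) ^ (a / b) :=
    one_add_mul_self_le_rpow_one_add (by linarith [Real.rpow_nonneg hs b])
      ((one_le_div hb).mpr hba)
  have hpow : (1 + (s ^ b - 1)) ^ (a / b) = s ^ a := by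
    rw [add_sub_cancel, ← Real.rpow_mul hs, mul_div_cancel₀ a hb.ne']
  rw [hpow] at hbern
  rw [div_le_div_iff₀ ha hb]
  have := mul_le_mul_of_nonneg_left hbern hb.le
  rw [mul_add, mul_one, ← mul_assoc, mul_div_cancel₀ a hb.ne'] at this
  linarith

theorem FD_stability_key_inequality_general
    (p q r γ astar : ℝ) (hp : 1 < p) (hpq : p < q) (hq5 : q ≤ 5) (hr : 5 < r)
    (ha : 0 < astar)
    (hrel : γ = (q + 1) / (q - 1) *
        ((p - 1) / (p + 1) * astar ^ ((p - q)/2) - (r - 1) / (r + 1) * astar ^ ((r - q)/2))) :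
    ∀ s ∈ Ioo (0:ℝ) 1,
      0 < (5 - p) / (p + 1) * (1 - s ^ ((p - 1)/2)) * astar ^ ((p - 1)/2)
          - γ * ((5 - q) / (q + 1)) * (1 - s ^ ((q - 1)/2)) * astar ^ ((q - 1)/2) := by
  rintro s ⟨hs0, hs1⟩
  set E := astar ^ ((p - q) / 2)
  set B := astar ^ ((q - 1) / 2)
  set X := 1 - s ^ ((p - 1) / 2)
  set Y := 1 - s ^ ((q - 1) / 2)
  have hX : 0 < X := sub_pos.mpr (Real.rpow_lt_one hs0.le hs1 (by linarith))
  have hY : 0 ≤ Y := sub_nonneg.mpr (Real.rpow_le_one hs0.le hs1.le (by linarith))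
  have hB : 0 < B := Real.rpow_pos_of_pos ha _
  have hsplit : astar ^ ((p - 1) / 2) = E * B := by
    rw [← Real.rpow_add ha]; ring_nf
  have hYX : Y / ((q - 1) / 2) ≤ X / ((p - 1) / 2) :=
    one_sub_rpow_div_le_one_sub_rpow_div hs0.le (by linarith) (by linarith)
  have hγE : γ * ((q - 1) / (q + 1)) ≤ (p - 1) / (p + 1) * E := by
    have hF : 0 ≤ (r - 1) / (r + 1) * astar ^ ((r - q) / 2) :=
      mul_nonneg (div_nonneg (by linarith) (by linarith)) (Real.rpow_nonneg ha.le _)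
    have hγ' : γ * ((q - 1) / (q + 1)) =
        (p - 1) / (p + 1) * E - (r - 1) / (r + 1) * astar ^ ((r - q) / 2) := by
      rw [hrel]; field_simp [show q - 1 ≠ 0 by linarith, show q + 1 ≠ 0 by linarith]
    linarith
  rw [hsplit, sub_pos]
  have h5q : 0 ≤ (5 - q) / 2 * B := mul_nonneg (by linarith) hB.le
  calc γ * ((5 - q) / (q + 1)) * Y * B
      = (5 - q) / 2 * B * (γ * ((q - 1) / (q + 1))) * (Y / ((q - 1) / 2)) := by
        field_simp [show q - 1 ≠ 0 by linarith, show q + 1 ≠ 0 by linarith]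
    _ ≤ (5 - q) / 2 * B * ((p - 1) / (p + 1) * E) * (X / ((p - 1) / 2)) := by
        gcongr
        exact div_nonneg hY (by linarith)
    _ = (5 - q) / (p + 1) * X * (E * B) := by
        field_simp [show p - 1 ≠ 0 by linarith, show p + 1 ≠ 0 by linarith]
    _ < (5 - p) / (p + 1) * X * (E * B) := by gcongr

theorem FD_stability_key_inequality
    (p q r γ astar : ℝ) (hp : 1 < p) (hpq : p < q) (hq5 : q ≤ 5) (hr : 5 < r)
    (hγ : 0 < γ) (ha : 0 < astar)
    (hrel : γ = (q + 1) / (q - 1) *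
        ((p - 1) / (p + 1) * astar ^ ((p - q)/2) - (r - 1) / (r + 1) * astar ^ ((r - q)/2))) :
    ∀ s ∈ Ioo (0:ℝ) 1,
      0 < (5 - p) / (p + 1) * (1 - s ^ ((p - 1)/2)) * astar ^ ((p - 1)/2)
          - γ * ((5 - q) / (q + 1)) * (1 - s ^ ((q - 1)/2)) * astar ^ ((q - 1)/2) :=
  FD_stability_key_inequality_general p q r γ astar hp hpq hq5 hr ha hrel
end

section
/- Let $1 < p < q < r$ with $p < 7/3$ and $\beta > 0$. Define for $s \in (0,1)$: $D_1(s) = s^{\frac{p-1}{2}} - s^{\frac{q-1}{2}}$, $D_2(s) = s^{\frac{q-1}{2}} - s^{\frac{r-1}{2}}$, and $\phi(s) = \left(\frac{D_1(s) + \beta D_2(s)}{s^{\frac{p-1}{2}} - s^{3-p}}\right)^{3/2}$. Then $\phi$ is strictly increasing on $(0,1)$ and has a finite limit as $s \to 1^-$. -/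
open Set Filter Real Topology

/-! With `a = (p-1)/2`, `b = (q-1)/2`, `c = (r-1)/2` and `d = 3-p` we have `a < d < b < c`, and the
base of `φ` is `(s^a - s^b)/(s^a - s^d) + β (s^b - s^c)/(s^a - s^d)`. Multiplied by `s`, the
Wronskian of each of these quotients is a combination of powers `s^t` whose coefficients have zero
sum and zero first moment, so it is positive by strict convexity of `t ↦ s^t`; hence both quotients
increase strictly. At `s = 1` all numerators and denominators vanish, so the limit is the quotient
of derivatives. -/

theorem strictConvexOn_rpow_left {b : ℝ} (hb₀ : 0 < b) (hb₁ : b ≠ 1) :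
    StrictConvexOn ℝ univ (fun x : ℝ => b ^ x) := by
  refine ⟨convex_univ, fun x _ y _ hxy t u ht hu htu => ?_⟩
  have hlog : log b ≠ 0 := log_ne_zero_of_pos_of_ne_one hb₀ hb₁
  simp only [smul_eq_mul, rpow_def_of_pos hb₀]
  calc exp (log b * (t * x + u * y)) = exp (t * (log b * x) + u * (log b * y)) := by ring_nf
    _ < t * exp (log b * x) + u * exp (log b * y) :=
      strictConvexOn_exp.2 (mem_univ _) (mem_univ _) (by simpa [hlog] using hxy) ht hu htu

theorem strictMonoOn_div_of_wronskian_pos {f g f' g' : ℝ → ℝ} {U : Set ℝ}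
    (hU : Convex ℝ U) (hUo : IsOpen U)
    (hf : ∀ x ∈ U, HasDerivAt f (f' x) x) (hg : ∀ x ∈ U, HasDerivAt g (g' x) x)
    (hg₀ : ∀ x ∈ U, g x ≠ 0) (hW : ∀ x ∈ U, 0 < f' x * g x - f x * g' x) :
    StrictMonoOn (fun x => f x / g x) U := by
  have hfg : ∀ x ∈ U, HasDerivAt (fun x => f x / g x)
      ((f' x * g x - f x * g' x) / g x ^ 2) x :=
    fun x hx => (hf x hx).div (hg x hx) (hg₀ x hx)
  refine strictMonoOn_of_deriv_pos hU (fun x hx => (hfg x hx).continuousAt.continuousWithinAt)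
    fun x hx => ?_
  rw [hUo.interior_eq] at hx
  rw [(hfg x hx).deriv]
  exact div_pos (hW x hx) (sq_pos_of_ne_zero (hg₀ x hx))

theorem tendsto_div_of_hasDerivAt_of_eq_zero {f g : ℝ → ℝ} {f' g' x₀ : ℝ}
    (hf : HasDerivAt f f' x₀) (hg : HasDerivAt g g' x₀) (hf₀ : f x₀ = 0) (hg₀ : g x₀ = 0)
    (hg' : g' ≠ 0) : Tendsto (fun x => f x / g x) (𝓝[≠] x₀) (𝓝 (f' / g')) := by
  refine ((hasDerivAt_iff_tendsto_slope.1 hf).div (hasDerivAt_iff_tendsto_slope.1 hg) hg').congr'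
    (eventually_nhdsWithin_of_forall fun x hx => ?_)
  have : x - x₀ ≠ 0 := sub_ne_zero.2 hx
  simp only [Pi.div_apply, slope_def_field, hf₀, hg₀, sub_zero]
  field_simp

theorem hasDerivAt_rpow_sub_rpow {s : ℝ} (hs : 0 < s) (x y : ℝ) :
    HasDerivAt (fun t => t ^ x - t ^ y) (x * s ^ (x - 1) - y * s ^ (y - 1)) s :=
  (hasDerivAt_rpow_const (Or.inl hs.ne')).sub (hasDerivAt_rpow_const (Or.inl hs.ne'))

theorem rpow_sub_rpow_wronskian {s : ℝ} (hs : 0 < s) (x y a d : ℝ) :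
    (x * s ^ (x - 1) - y * s ^ (y - 1)) * (s ^ a - s ^ d)
        - (s ^ x - s ^ y) * (a * s ^ (a - 1) - d * s ^ (d - 1))
      = ((x - a) * s ^ (x + a) - (x - d) * s ^ (x + d) - (y - a) * s ^ (y + a)
          + (y - d) * s ^ (y + d)) / s := by
  simp only [rpow_sub hs, rpow_add hs, rpow_one]
  field_simp
  ring

theorem strictMonoOn_rpow_sub_div_rpow_sub {x y a d : ℝ} (had : a < d)
    (hW : ∀ s ∈ Ioo (0 : ℝ) 1, 0 < (x - a) * s ^ (x + a) - (x - d) * s ^ (x + d)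
      - (y - a) * s ^ (y + a) + (y - d) * s ^ (y + d)) :
    StrictMonoOn (fun s => (s ^ x - s ^ y) / (s ^ a - s ^ d)) (Ioo (0 : ℝ) 1) :=
  strictMonoOn_div_of_wronskian_pos (convex_Ioo 0 1) isOpen_Ioo
    (fun s hs => hasDerivAt_rpow_sub_rpow hs.1 x y) (fun s hs => hasDerivAt_rpow_sub_rpow hs.1 a d)
    (fun s hs => (sub_pos.2 (rpow_lt_rpow_of_exponent_gt hs.1 hs.2 had)).ne')
    fun s hs => by rw [rpow_sub_rpow_wronskian hs.1]; exact div_pos (hW s hs) hs.1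

theorem strictMonoOn_rpow_sub_div_rpow_sub_left {a b d : ℝ} (had : a < d) (hdb : d < b) :
    StrictMonoOn (fun s => (s ^ a - s ^ b) / (s ^ a - s ^ d)) (Ioo (0 : ℝ) 1) := by
  refine strictMonoOn_rpow_sub_div_rpow_sub had fun s hs => ?_
  have := (strictConvexOn_rpow_left hs.1 hs.2.ne).secant_strict_mono_aux1 (mem_univ (a + d))
    (mem_univ (b + d)) (by linarith : a + d < b + a) (by linarith)
  linear_combination this

/-- The Wronskian is a positive combination of the convexity inequalities for `t ↦ s ^ t` at
`b + d` and at `c + a`, both between `b + a` and `c + d`. -/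
theorem strictMonoOn_rpow_sub_div_rpow_sub_right {a b c d : ℝ} (had : a < d) (hdb : d ≤ b)
    (hbc : b < c) :
    StrictMonoOn (fun s => (s ^ b - s ^ c) / (s ^ a - s ^ d)) (Ioo (0 : ℝ) 1) := by
  refine strictMonoOn_rpow_sub_div_rpow_sub had fun s hs => ?_
  have hconv := strictConvexOn_rpow_left hs.1 hs.2.ne
  have h₁ := hconv.secant_strict_mono_aux1 (mem_univ (b + a)) (mem_univ (c + d))
    (by linarith : b + a < b + d) (by linarith)
  have h₂ := hconv.secant_strict_mono_aux1 (mem_univ (b + a)) (mem_univ (c + d))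
    (by linarith : b + a < c + a) (by linarith)
  refine pos_of_mul_pos_right ?_ (by linarith : 0 ≤ c + d - (b + a))
  linear_combination mul_le_mul_of_nonneg_left h₁.le (sub_nonneg.2 hdb)
    + mul_lt_mul_of_pos_left h₂ (by linarith : 0 < c - a)

theorem tendsto_rpow_sub_div_rpow_sub_nhdsNE_one (x y : ℝ) {a d : ℝ} (had : a ≠ d) :
    Tendsto (fun s => (s ^ x - s ^ y) / (s ^ a - s ^ d)) (𝓝[≠] 1) (𝓝 ((x - y) / (a - d))) := by
  simpa using tendsto_div_of_hasDerivAt_of_eq_zero (hasDerivAt_rpow_sub_rpow one_pos x y)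
    (hasDerivAt_rpow_sub_rpow one_pos a d) (by simp) (by simp) (by simpa [sub_eq_zero] using had)

theorem phi_strict_mono_and_limit_general
    (p q r β : ℝ) (hqr : q < r) (hp73 : p < 7/3)
    (hβ : 0 < β) (hq7 : 7 - 2*p < q)
    (φ : ℝ → ℝ)
    (hφ : ∀ s ∈ Ioo (0:ℝ) 1,
      φ s = (((s ^ ((p - 1)/2) - s ^ ((q - 1)/2))
          + β * (s ^ ((q - 1)/2) - s ^ ((r - 1)/2)))
            / (s ^ ((p - 1)/2) - s ^ (3 - p))) ^ ((3:ℝ)/2)) :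
    StrictMonoOn φ (Ioo (0:ℝ) 1) ∧
      ∃ L : ℝ, Tendsto φ (nhdsWithin 1 (Iio 1)) (nhds L) := by
  have had : (p - 1) / 2 < 3 - p := by linarith
  have hdb : 3 - p < (q - 1) / 2 := by linarith
  have hbc : (q - 1) / 2 < (r - 1) / 2 := by linarith
  set a := (p - 1) / 2
  set b := (q - 1) / 2
  set c := (r - 1) / 2
  set d := 3 - p
  set R : ℝ → ℝ := fun s =>
    (s ^ a - s ^ b) / (s ^ a - s ^ d) + β * ((s ^ b - s ^ c) / (s ^ a - s ^ d))
  have hφR : EqOn φ (fun s => R s ^ ((3 : ℝ) / 2)) (Ioo 0 1) := fun s hs => by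
    rw [hφ s hs, add_div, mul_div_assoc]
  have hR_pos : ∀ s ∈ Ioo (0 : ℝ) 1, 0 < R s := fun s hs => by
    have hlt {x y : ℝ} (hxy : x < y) : 0 < s ^ x - s ^ y :=
      sub_pos.2 (rpow_lt_rpow_of_exponent_gt hs.1 hs.2 hxy)
    have := hlt (had.trans hdb)
    have := hlt had
    have := hlt hbc
    positivity
  have hR_mono : StrictMonoOn R (Ioo 0 1) :=
    (strictMonoOn_rpow_sub_div_rpow_sub_left had hdb).add fun x hx y hy hxy =>
      mul_lt_mul_of_pos_left (strictMonoOn_rpow_sub_div_rpow_sub_right had hdb.le hbc hx hy hxy) hβ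
  refine ⟨fun x hx y hy hxy => ?_, ?_⟩
  · rw [hφR hx, hφR hy]
    exact rpow_lt_rpow (hR_pos x hx).le (hR_mono hx hy hxy) (by norm_num)
  · have hR_lim := ((tendsto_rpow_sub_div_rpow_sub_nhdsNE_one a b had.ne).add
      ((tendsto_rpow_sub_div_rpow_sub_nhdsNE_one b c had.ne).const_mul β)).mono_left
        (nhdsWithin_mono 1 fun s hs => ne_of_lt hs)
    refine ⟨_, (hR_lim.rpow_const (p := 3 / 2) (Or.inr (by norm_num))).congr' ?_⟩
    filter_upwards [Ioo_mem_nhdsLT one_pos] with s hs using (hφR hs).symm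

theorem phi_strict_mono_and_limit
    (p q r β : ℝ) (hp : 1 < p) (hpq : p < q) (hqr : q < r) (hp73 : p < 7/3)
    (hβ : 0 < β) (hq7 : 7 - 2*p < q)
    (φ : ℝ → ℝ)
    (hφ : ∀ s ∈ Ioo (0:ℝ) 1,
      φ s = (((s ^ ((p - 1)/2) - s ^ ((q - 1)/2))
          + β * (s ^ ((q - 1)/2) - s ^ ((r - 1)/2)))
            / (s ^ ((p - 1)/2) - s ^ (3 - p))) ^ ((3:ℝ)/2)) :
    StrictMonoOn φ (Ioo (0:ℝ) 1) ∧
      ∃ L : ℝ, Tendsto φ (nhdsWithin 1 (Iio 1)) (nhds L) :=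
  phi_strict_mono_and_limit_general p q r β hqr hp73 hβ hq7 φ hφ
end
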